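/- arXiv:1204.3730 — 4 statements merged into one kernel-verified Lean document; each statement's English description precedes it below -/
import Mathlib

section
/- Consider the Robbins–Monro scheme θ_{n+1} = θ_n − γ_{n+1} H(θ_n, Y_{n+1}) with (θ,y) ↦ H(θ,y) uniformly Lipschitz with constant [H]₁, h(θ) = E[H(θ,Y)] continuously differentiable with ⟨Dh(θ)ξ, ξ⟩ ≥ λ̲|ξ|² for all θ, ξ, and i.i.d. innovations satisfying GC(α). Then for all N ≥ 1 and r ≥ 0, P(|θ_N − θ*| ≥ r + δ_N) ≤ exp(−r² / (α [H]₁² Π_N ∑_{k=1}^N γ_k²/Π_k)), where Π_N = ∏_{k=0}^{N−1}(1 − 2λ̲γ_{k+1} + [H]₁²γ_{k+1}²) and δ_N = E[|θ_N − θ*|]. -/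
open MeasureTheory Real ProbabilityTheory
open scoped RealInnerProductSpace NNReal ENNReal

/-!
Strong monotonicity of `h`, which follows from the bound on `Dh`, makes one step of the scheme a
contraction in `L²`: `𝔼 ‖(a - t H(a,Y)) - (b - t H(b,Y))‖² ≤ c(t) ‖a - b‖²` with
`c(t) = 1 - 2λ̲t + [H]₁²t²`. Hence, by Cauchy–Schwarz, the one-step operator
`P_t f (x) = 𝔼 f(x - t H(x,Y))` (`transition`) maps `L`-Lipschitz functions to
`L √c(t)`-Lipschitz ones. For
`L`-Lipschitz `f`, the map `y ↦ f(x - t H(x,y))` is `L t [H]₁`-Lipschitz, so `GC(α)` gives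
`𝔼 exp(l f(x - t H(x,Y))) ≤ exp(l P_t f(x) + α l² L² t² [H]₁² / 4)`. Since `θ_n` is independent of
`Y_{n+1}`, an induction on `n`, run for all Lipschitz `f` at once, shows that `f(θ_n)` is
sub-Gaussian around its mean with variance proxy `α [H]₁² L² Π_n ∑_{k ≤ n} γ_k² / Π_k`, and the
Chernoff bound concludes.
-/

theorem LipschitzWith.norm_le_norm_add_mul {E G : Type*} [SeminormedAddCommGroup E]
    [SeminormedAddCommGroup G] {g : E → G}
    {L : ℝ≥0} (hg : LipschitzWith L g) (y : E) : ‖g y‖ ≤ ‖g 0‖ + L * ‖y‖ := by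
  have := hg.dist_le_mul y 0
  rw [dist_eq_norm, dist_zero_right] at this
  linarith [norm_le_insert' (g y) (g 0)]

theorem LipschitzWith.of_uncurry_left {α β γ : Type*} [PseudoEMetricSpace α]
    [PseudoEMetricSpace β] [PseudoEMetricSpace γ] {f : α → β → γ} {K : ℝ≥0}
    (hf : LipschitzWith K (Function.uncurry f)) (b : β) : LipschitzWith K fun a => f a b := by
  have := hf.comp (LipschitzWith.prodMk_right b)
  rwa [mul_one] at this

theorem LipschitzWith.of_uncurry_right {α β γ : Type*} [PseudoEMetricSpace α]
    [PseudoEMetricSpace β] [PseudoEMetricSpace γ] {f : α → β → γ} {K : ℝ≥0}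
    (hf : LipschitzWith K (Function.uncurry f)) (a : α) : LipschitzWith K (f a) := by
  have := hf.comp (LipschitzWith.prodMk_left a)
  rwa [mul_one] at this

section GaussianConcentration

variable {E : Type*} [NormedAddCommGroup E] [MeasurableSpace E]

/-- The Gaussian concentration property `GC(α)` of a law `ν`. -/
def GaussianConcentration (α : ℝ) (ν : Measure E) : Prop :=
  ∀ f : E → ℝ, LipschitzWith 1 f → ∀ l : ℝ, 0 ≤ l →
    ∫ y, exp (l * f y) ∂ν ≤ exp (l * ∫ y, f y ∂ν + α * l ^ 2 / 4)

theorem gaussianConcentration_map_iff {Ω : Type*} [MeasurableSpace Ω] {μ : Measure Ω}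
    [OpensMeasurableSpace E] {Y : Ω → E} (hY : AEMeasurable Y μ) {α : ℝ} :
    GaussianConcentration α (μ.map Y) ↔ ∀ f : E → ℝ, LipschitzWith 1 f → ∀ l : ℝ, 0 ≤ l →
      ∫ ω, exp (l * f (Y ω)) ∂μ ≤ exp (l * ∫ ω, f (Y ω) ∂μ + α * l ^ 2 / 4) := by
  refine forall₂_congr fun f hf => ?_
  rw [integral_map hY hf.continuous.aestronglyMeasurable]
  refine forall₂_congr fun l _ => ?_
  rw [integral_map hY (f := fun y => exp (l * f y))
    (continuous_exp.comp (continuous_const.mul hf.continuous)).aestronglyMeasurable]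

variable {ν : Measure E} [IsProbabilityMeasure ν] {α : ℝ}

theorem GaussianConcentration.integral_exp_le (hν : GaussianConcentration α ν) {f : E → ℝ}
    {L : ℝ≥0} (hf : LipschitzWith L f) {l : ℝ} (hl : 0 ≤ l) :
    ∫ y, exp (l * f y) ∂ν ≤ exp (l * ∫ y, f y ∂ν + α * L ^ 2 * l ^ 2 / 4) := by
  rcases eq_or_ne L 0 with rfl | hL
  · have hmean : ∀ y, ∫ z, f z ∂ν = f y := fun y => by
      rw [integral_congr_ae (ae_of_all _ fun z => (LipschitzWith.zero_iff f).1 hf z y)]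
      simp
    rw [integral_congr_ae (ae_of_all _ fun y => by rw [← hmean y])]
    simp
  · have hL' : (0 : ℝ) < L := by positivity
    have hg : LipschitzWith 1 fun y => f y / L := by
      refine LipschitzWith.of_dist_le_mul fun y y' => ?_
      rw [Real.dist_eq, ← sub_div, abs_div, abs_of_pos hL', NNReal.coe_one, one_mul,
        div_le_iff₀ hL', mul_comm, ← Real.dist_eq]
      exact hf.dist_le_mul y y'
    have := hν _ hg (l * L) (by positivity)
    rw [integral_div] at this
    convert this using 3
    · field_simp
    · field_simp
    · ring

variable [BorelSpace E]

theorem GaussianConcentration.exists_integral_min_norm_le (hν : GaussianConcentration α ν) :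
    ∃ M, ∀ n : ℕ, ∫ y, min ‖y‖ n ∂ν ≤ M := by
  obtain ⟨R, hR⟩ : ∃ R : ℕ, 0 < ν {y | ‖y‖ ≤ R} := by
    refine exists_measure_pos_of_not_measure_iUnion_null ?_
    have hcover : (⋃ n : ℕ, {y : E | ‖y‖ ≤ n}) = Set.univ :=
      Set.iUnion_eq_univ_iff.2 fun y => exists_nat_ge ‖y‖
    simp [hcover]
  -- GC applied to `-min ‖·‖ n` bounds `∫ exp (-min ‖y‖ n)` by `exp (-m + α/4)`, `m` the mean;
  -- but that integral is at least `exp (-R) ν {‖y‖ ≤ R}`, which keeps `m` bounded.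
  set p := ν.real {y | ‖y‖ ≤ R}
  have hp : 0 < p := ENNReal.toReal_pos hR.ne' (measure_ne_top _ _)
  refine ⟨R + α / 4 - log p, fun n => ?_⟩
  have hlip : LipschitzWith 1 fun y : E => -min ‖y‖ n := lipschitzWith_one_norm.min_const _ |>.neg
  have hint : Integrable (fun y : E => exp (-min ‖y‖ n)) ν :=
    Integrable.of_bound (by fun_prop) 1 (ae_of_all _ fun y => by
      simp only [norm_eq_abs, abs_exp, exp_le_one_iff, Left.neg_nonpos_iff]
      exact le_min (norm_nonneg y) n.cast_nonneg)
  have hupper := hν _ hlip 1 zero_le_one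
  have hlower : exp (-R) * p ≤ ∫ y, exp (-min ‖y‖ n) ∂ν := by
    calc exp (-R) * p = ∫ y, {y : E | ‖y‖ ≤ R}.indicator (fun _ => exp (-R)) y ∂ν := by
          rw [integral_indicator_const _ (measurableSet_le (by fun_prop) (by fun_prop)),
            smul_eq_mul, mul_comm]
      _ ≤ ∫ y, exp (-min ‖y‖ n) ∂ν := by
          refine integral_mono ((integrable_const _).indicator
            (measurableSet_le (by fun_prop) (by fun_prop))) hint fun y => ?_
          by_cases hy : ‖y‖ ≤ R
          · simp only [Set.indicator_of_mem (show y ∈ {y : E | ‖y‖ ≤ R} from hy)]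
            exact exp_le_exp.2 (neg_le_neg ((min_le_left _ _).trans hy))
          · simp only [Set.indicator_of_notMem (show y ∉ {y : E | ‖y‖ ≤ R} from hy)]
            exact (exp_pos _).le
  simp only [one_mul, one_pow, mul_one, integral_neg] at hupper
  have := (log_le_log (by positivity) (hlower.trans hupper))
  rw [log_mul (exp_pos _).ne' hp.ne', log_exp, log_exp] at this
  linarith

theorem GaussianConcentration.integrable_exp_mul_norm (hν : GaussianConcentration α ν) (c : ℝ) :
    Integrable (fun y => exp (c * ‖y‖)) ν := by
  rcases le_or_gt c 0 with hc | hc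
  · refine Integrable.of_bound (by fun_prop) 1 (ae_of_all _ fun y => ?_)
    rw [norm_eq_abs, abs_exp, exp_le_one_iff]
    exact mul_nonpos_of_nonpos_of_nonneg hc (norm_nonneg y)
  obtain ⟨M, hM⟩ := hν.exists_integral_min_norm_le
  have hmono : Monotone fun (n : ℕ) (y : E) => ENNReal.ofReal (exp (c * min ‖y‖ n)) :=
    fun m n hmn y => ENNReal.ofReal_le_ofReal <| exp_le_exp.2 <|
      mul_le_mul_of_nonneg_left (min_le_min_left _ (Nat.cast_le.2 hmn)) hc.le
  have hsup : ∀ y : E, ⨆ n : ℕ, ENNReal.ofReal (exp (c * min ‖y‖ n)) =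
      ENNReal.ofReal (exp (c * ‖y‖)) := fun y => by
    obtain ⟨n, hn⟩ := exists_nat_ge ‖y‖
    refine le_antisymm (iSup_le fun m => ENNReal.ofReal_le_ofReal <| exp_le_exp.2 <|
      mul_le_mul_of_nonneg_left (min_le_left _ _) hc.le) (le_iSup_of_le n ?_)
    rw [min_eq_left hn]
  refine ⟨by fun_prop, (hasFiniteIntegral_iff_ofReal (ae_of_all _ fun y => (exp_pos _).le)).2 ?_⟩
  calc ∫⁻ y, ENNReal.ofReal (exp (c * ‖y‖)) ∂ν
      = ⨆ n : ℕ, ∫⁻ y, ENNReal.ofReal (exp (c * min ‖y‖ n)) ∂ν := by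
        simp_rw [← hsup]
        exact lintegral_iSup (fun n => by fun_prop) hmono
    _ ≤ ENNReal.ofReal (exp (c * M + α * c ^ 2 / 4)) := iSup_le fun n => by
        have hbdd : Integrable (fun y : E => exp (c * min ‖y‖ n)) ν :=
          Integrable.of_bound (by fun_prop) (exp (c * n)) (ae_of_all _ fun y => by
            rw [norm_eq_abs, abs_exp, exp_le_exp]
            exact mul_le_mul_of_nonneg_left (min_le_right _ _) hc.le)
        rw [← ofReal_integral_eq_lintegral_ofReal hbdd (ae_of_all _ fun y => (exp_pos _).le)]
        refine ENNReal.ofReal_le_ofReal <|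
          (hν _ (lipschitzWith_one_norm.min_const _) c hc.le).trans ?_
        gcongr
        exact hM n
    _ < ⊤ := ENNReal.ofReal_lt_top

theorem GaussianConcentration.integrable_exp_of_lipschitz (hν : GaussianConcentration α ν)
    {f : E → ℝ} {L : ℝ≥0} (hf : LipschitzWith L f) (l : ℝ) :
    Integrable (fun y => exp (l * f y)) ν := by
  refine ((hν.integrable_exp_mul_norm (|l| * L)).const_mul (exp (|l| * |f 0|))).mono'
    (continuous_exp.comp (continuous_const.mul hf.continuous)).aestronglyMeasurable
    (ae_of_all _ fun y => ?_)
  rw [norm_eq_abs, abs_exp, ← exp_add, exp_le_exp]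
  calc l * f y ≤ |l| * |f y| := (le_abs_self _).trans (abs_mul _ _).le
    _ ≤ |l| * (|f 0| + L * ‖y‖) := by gcongr; exact hf.norm_le_norm_add_mul y
    _ = |l| * |f 0| + |l| * L * ‖y‖ := by ring

theorem GaussianConcentration.integrable_of_lipschitz {G : Type*} [NormedAddCommGroup G]
    [SecondCountableTopologyEither E G] (hν : GaussianConcentration α ν) {g : E → G} {L : ℝ≥0}
    (hg : LipschitzWith L g) : Integrable g ν := by
  have hnorm : Integrable (fun y : E => ‖y‖) ν :=
    (hν.integrable_exp_mul_norm 1).mono' (by fun_prop) (ae_of_all _ fun y => by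
      rw [norm_norm, one_mul]; linarith [add_one_le_exp ‖y‖])
  exact ((integrable_const ‖g 0‖).add (hnorm.const_mul L)).mono' hg.continuous.aestronglyMeasurable
    (ae_of_all _ hg.norm_le_norm_add_mul)

end GaussianConcentration

theorem measure_ge_le_exp_of_lintegral_exp_le {Ω : Type*} [MeasurableSpace Ω] {μ : Measure Ω}
    {g : Ω → ℝ} (hg : AEMeasurable g μ) {δ A : ℝ} (hA : 0 < A)
    (hmgf : ∀ l : ℝ, 0 ≤ l → ∫⁻ ω, ENNReal.ofReal (exp (l * g ω)) ∂μ ≤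
      ENNReal.ofReal (exp (l * δ + A * l ^ 2 / 4)))
    {r : ℝ} (hr : 0 ≤ r) :
    μ {ω | r + δ ≤ g ω} ≤ ENNReal.ofReal (exp (-r ^ 2 / A)) := by
  -- the Chernoff bound at the optimal parameter `l = 2r/A`
  set l := 2 * r / A
  have hl : 0 ≤ l := by positivity
  calc μ {ω | r + δ ≤ g ω}
      ≤ μ {ω | ENNReal.ofReal (exp (l * (r + δ))) ≤ ENNReal.ofReal (exp (l * g ω))} :=
        measure_mono fun ω hω => ENNReal.ofReal_le_ofReal <| exp_le_exp.2 <|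
          mul_le_mul_of_nonneg_left hω hl
    _ ≤ (∫⁻ ω, ENNReal.ofReal (exp (l * g ω)) ∂μ) / ENNReal.ofReal (exp (l * (r + δ))) :=
        meas_ge_le_lintegral_div (by fun_prop) (by simp [exp_pos]) ENNReal.ofReal_ne_top
    _ ≤ ENNReal.ofReal (exp (l * δ + A * l ^ 2 / 4)) / ENNReal.ofReal (exp (l * (r + δ))) := by
        gcongr
        exact hmgf l hl
    _ = ENNReal.ofReal (exp (-r ^ 2 / A)) := by
        rw [← ENNReal.ofReal_div_of_pos (exp_pos _), ← exp_sub]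
        congr 2
        simp only [l]
        field_simp
        ring

theorem mul_norm_sub_sq_le_inner_sub_of_fderiv {F : Type*} [NormedAddCommGroup F]
    [InnerProductSpace ℝ F] {h : F → F} (hh : Differentiable ℝ h) {lam : ℝ}
    (hD : ∀ x ξ, lam * ‖ξ‖ ^ 2 ≤ ⟪fderiv ℝ h x ξ, ξ⟫) (a b : F) :
    lam * ‖a - b‖ ^ 2 ≤ ⟪h a - h b, a - b⟫ := by
  set v := a - b
  set φ : ℝ → ℝ := fun t => ⟪h (b + t • v), v⟫
  have hφ : ∀ t, HasDerivAt φ ⟪fderiv ℝ h (b + t • v) v, v⟫ t := fun t => by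
    have hline : HasDerivAt (fun t : ℝ => b + t • v) v t := by
      simpa using ((hasDerivAt_id t).smul_const v).const_add b
    simpa using ((hh _).hasFDerivAt.comp_hasDerivAt t hline).inner ℝ (hasDerivAt_const t v)
  have := mul_sub_le_image_sub_of_le_deriv (fun t => (hφ t).differentiableAt)
    (fun t => (hφ t).deriv ▸ hD _ v) zero_le_one
  simpa [φ, v, inner_sub_left] using this

theorem sq_integral_le_integral_sq {Ω : Type*} [MeasurableSpace Ω] {μ : Measure Ω}
    [IsProbabilityMeasure μ] {g : Ω → ℝ} (hg : MemLp g 2 μ) :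
    (∫ ω, g ω ∂μ) ^ 2 ≤ ∫ ω, g ω ^ 2 ∂μ := by
  have := variance_nonneg g μ
  rw [variance_eq_sub hg] at this
  simpa [sub_nonneg] using this

namespace RobbinsMonro

variable {E F : Type*} [MeasurableSpace E] [NormedAddCommGroup F] [InnerProductSpace ℝ F]

noncomputable def transition (ν : Measure E) (H : F → E → F) (t : ℝ) (f : F → ℝ) (x : F) : ℝ :=
  ∫ e, f (x - t • H x e) ∂ν

def contractionFactor (lam K t : ℝ) : ℝ := 1 - 2 * lam * t + K ^ 2 * t ^ 2

/-- Equals `Π_n ∑_{k=1}^n γ_k² / Π_k` when `Π_n ≠ 0` (`varianceProxy_eq`). -/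
def varianceProxy (lam K : ℝ) (γ : ℕ → ℝ) : ℕ → ℝ
  | 0 => 0
  | n + 1 => γ (n + 1) ^ 2 + contractionFactor lam K (γ (n + 1)) * varianceProxy lam K γ n

theorem varianceProxy_nonneg {lam K : ℝ} {γ : ℕ → ℝ}
    (hc : ∀ n, 0 ≤ contractionFactor lam K (γ (n + 1))) (n : ℕ) : 0 ≤ varianceProxy lam K γ n := by
  induction n with
  | zero => exact le_rfl
  | succ n ih => exact add_nonneg (sq_nonneg _) (mul_nonneg (hc n) ih)

theorem varianceProxy_pos {lam K : ℝ} {γ : ℕ → ℝ}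
    (hc : ∀ n, 0 ≤ contractionFactor lam K (γ (n + 1))) (hγ : ∀ n, γ (n + 1) ≠ 0) {N : ℕ}
    (hN : N ≠ 0) : 0 < varianceProxy lam K γ N := by
  obtain ⟨n, rfl⟩ := Nat.exists_eq_add_one_of_ne_zero hN
  have := hγ n
  exact add_pos_of_pos_of_nonneg (by positivity) (mul_nonneg (hc n) (varianceProxy_nonneg hc n))

theorem varianceProxy_eq {lam K : ℝ} {γ : ℕ → ℝ} {N : ℕ}
    (hP : ∏ k ∈ Finset.range N, contractionFactor lam K (γ (k + 1)) ≠ 0) :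
    varianceProxy lam K γ N = (∏ k ∈ Finset.range N, contractionFactor lam K (γ (k + 1))) *
      ∑ k ∈ Finset.Icc 1 N,
        γ k ^ 2 / ∏ j ∈ Finset.range k, contractionFactor lam K (γ (j + 1)) := by
  induction N with
  | zero => simp [varianceProxy]
  | succ N ih =>
    rw [Finset.prod_range_succ] at hP ⊢
    obtain ⟨hPN, hcN⟩ := mul_ne_zero_iff.1 hP
    rw [varianceProxy, ih hPN, Finset.sum_Icc_succ_top (by omega), Finset.prod_range_succ]
    field_simp
    ring

variable {ν : Measure E} [IsProbabilityMeasure ν] {H : F → E → F} {K : ℝ≥0}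

theorem integrable_norm_sub_sq (hHint : ∀ x, Integrable (H x) ν)
    (hHθ : ∀ e, LipschitzWith K (H · e)) (t : ℝ) (a b : F) :
    Integrable (fun e => ‖(a - t • H a e) - (b - t • H b e)‖ ^ 2) ν := by
  refine Integrable.of_bound ?_ (((1 + |t| * K) * ‖a - b‖) ^ 2) (ae_of_all _ fun e => ?_)
  · exact ((aestronglyMeasurable_const.sub ((hHint a).1.const_smul t)).sub
      (aestronglyMeasurable_const.sub ((hHint b).1.const_smul t))).norm.pow 2
  rw [norm_pow, norm_norm]
  gcongr
  calc ‖(a - t • H a e) - (b - t • H b e)‖ = ‖(a - b) - t • (H a e - H b e)‖ := by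
        rw [smul_sub]; abel_nf
    _ ≤ ‖a - b‖ + |t| * (K * ‖a - b‖) := by
        grw [norm_sub_le, norm_smul, norm_eq_abs, ← dist_eq_norm (H a e), (hHθ e).dist_le_mul,
          dist_eq_norm]
    _ = (1 + |t| * K) * ‖a - b‖ := by ring

variable [CompleteSpace F] {h : F → F} {lam : ℝ}

theorem integral_norm_sub_sq_le (hHint : ∀ x, Integrable (H x) ν)
    (hHθ : ∀ e, LipschitzWith K (H · e)) (hdef : ∀ x, h x = ∫ e, H x e ∂ν)
    (hmono : ∀ a b, lam * ‖a - b‖ ^ 2 ≤ ⟪h a - h b, a - b⟫) {t : ℝ} (ht : 0 ≤ t) (a b : F) :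
    ∫ e, ‖(a - t • H a e) - (b - t • H b e)‖ ^ 2 ∂ν ≤ contractionFactor lam K t * ‖a - b‖ ^ 2 := by
  set v := a - b
  have hΔ : Integrable (fun e => H a e - H b e) ν := (hHint a).sub (hHint b)
  have hpoint : ∀ e, ‖(a - t • H a e) - (b - t • H b e)‖ ^ 2 ≤
      (1 + t ^ 2 * K ^ 2) * ‖v‖ ^ 2 - 2 * t * ⟪v, H a e - H b e⟫ := fun e => by
    have hexp : (a - t • H a e) - (b - t • H b e) = v - t • (H a e - H b e) := by
      rw [smul_sub]; simp only [v]; abel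
    have hlip : ‖H a e - H b e‖ ≤ K * ‖v‖ := by
      rw [← dist_eq_norm, ← dist_eq_norm]; exact (hHθ e).dist_le_mul a b
    rw [hexp, norm_sub_sq_real, real_inner_smul_right, norm_smul, norm_eq_abs, mul_pow, sq_abs]
    nlinarith [pow_le_pow_left₀ (norm_nonneg _) hlip 2, sq_nonneg t]
  have hmean : ∫ e, ⟪v, H a e - H b e⟫ ∂ν = ⟪h a - h b, v⟫ := by
    rw [integral_inner hΔ, integral_sub (hHint a) (hHint b), ← hdef, ← hdef, real_inner_comm]
  calc ∫ e, ‖(a - t • H a e) - (b - t • H b e)‖ ^ 2 ∂ν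
      ≤ ∫ e, ((1 + t ^ 2 * K ^ 2) * ‖v‖ ^ 2 - 2 * t * ⟪v, H a e - H b e⟫) ∂ν :=
        integral_mono (integrable_norm_sub_sq hHint hHθ t a b)
          ((integrable_const _).sub ((hΔ.const_inner v).const_mul _)) hpoint
    _ = (1 + t ^ 2 * K ^ 2) * ‖v‖ ^ 2 - 2 * t * ⟪h a - h b, v⟫ := by
        rw [integral_sub (integrable_const _) ((hΔ.const_inner v).const_mul _), integral_const,
          integral_const_mul, hmean]
        simp
    _ ≤ contractionFactor lam K t * ‖v‖ ^ 2 := by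
        unfold contractionFactor
        nlinarith [mul_le_mul_of_nonneg_left (hmono a b) ht]

theorem contractionFactor_nonneg [Nontrivial F] (hHint : ∀ x, Integrable (H x) ν)
    (hHθ : ∀ e, LipschitzWith K (H · e)) (hdef : ∀ x, h x = ∫ e, H x e ∂ν)
    (hmono : ∀ a b, lam * ‖a - b‖ ^ 2 ≤ ⟪h a - h b, a - b⟫) {t : ℝ} (ht : 0 ≤ t) :
    0 ≤ contractionFactor lam K t := by
  obtain ⟨v, hv⟩ := exists_ne (0 : F)
  have := (integral_nonneg fun e => sq_nonneg _).trans
    (integral_norm_sub_sq_le hHint hHθ hdef hmono ht v 0)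
  rw [sub_zero] at this
  exact nonneg_of_mul_nonneg_left this (by positivity)

theorem lipschitzWith_transition (hHint : ∀ x, Integrable (H x) ν)
    (hHθ : ∀ e, LipschitzWith K (H · e)) (hdef : ∀ x, h x = ∫ e, H x e ∂ν)
    (hmono : ∀ a b, lam * ‖a - b‖ ^ 2 ≤ ⟪h a - h b, a - b⟫) {t : ℝ} (ht : 0 ≤ t)
    {f : F → ℝ} {L : ℝ≥0} (hf : LipschitzWith L f)
    (hint : ∀ x, Integrable (fun e => f (x - t • H x e)) ν) :
    LipschitzWith (L * NNReal.sqrt (contractionFactor lam K t).toNNReal) (transition ν H t f) := by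
  refine LipschitzWith.of_dist_le_mul fun x y => ?_
  set g := fun e => f (x - t • H x e) - f (y - t • H y e)
  have hg : ∀ e, g e ^ 2 ≤ L ^ 2 * ‖(x - t • H x e) - (y - t • H y e)‖ ^ 2 := fun e => by
    rw [← mul_pow, ← sq_abs, ← Real.dist_eq, ← dist_eq_norm]
    exact pow_le_pow_left₀ dist_nonneg (hf.dist_le_mul _ _) 2
  have hsteps := integrable_norm_sub_sq hHint hHθ t x y
  have hg2 : Integrable (fun e => g e ^ 2) ν :=
    (hsteps.const_mul _).mono' (((hint x).sub (hint y)).1.pow 2) (ae_of_all _ fun e => by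
      rw [norm_pow, norm_eq_abs, sq_abs]; exact hg e)
  have hsq : (∫ e, g e ∂ν) ^ 2 ≤ (L * √(contractionFactor lam K t).toNNReal * dist x y) ^ 2 :=
    calc (∫ e, g e ∂ν) ^ 2 ≤ ∫ e, g e ^ 2 ∂ν :=
          sq_integral_le_integral_sq ((memLp_two_iff_integrable_sq ((hint x).sub (hint y)).1).2 hg2)
      _ ≤ ∫ e, L ^ 2 * ‖(x - t • H x e) - (y - t • H y e)‖ ^ 2 ∂ν :=
          integral_mono hg2 (hsteps.const_mul _) hg
      _ ≤ L ^ 2 * (contractionFactor lam K t * ‖x - y‖ ^ 2) := by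
          rw [integral_const_mul]
          gcongr
          exact integral_norm_sub_sq_le hHint hHθ hdef hmono ht x y
      _ ≤ (L * √(contractionFactor lam K t).toNNReal * dist x y) ^ 2 := by
          rw [mul_pow, mul_pow, Real.sq_sqrt NNReal.zero_le_coe, dist_eq_norm, mul_assoc]
          gcongr
          exact Real.le_coe_toNNReal _
  rw [Real.dist_eq, transition, transition, ← integral_sub (hint x) (hint y)]
  push_cast
  exact abs_le_of_sq_le_sq hsq (by positivity)

end RobbinsMonro

section Recursion

variable {Ω E F : Type*} {mΩ : MeasurableSpace Ω} [mE : MeasurableSpace E] [MeasurableSpace F]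
  {μ : Measure Ω}

theorem ProbabilityTheory.IndepFun.lintegral_comp_eq [IsFiniteMeasure μ] {X : Ω → F} {Z : Ω → E}
    (hXZ : IndepFun X Z μ) (hX : Measurable X) (hZ : Measurable Z) {Φ : F → E → ℝ≥0∞}
    (hΦ : Measurable (Function.uncurry Φ)) :
    ∫⁻ ω, Φ (X ω) (Z ω) ∂μ = ∫⁻ ω, ∫⁻ z, Φ (X ω) z ∂(μ.map Z) ∂μ := by
  calc ∫⁻ ω, Φ (X ω) (Z ω) ∂μ = ∫⁻ p, Function.uncurry Φ p ∂(μ.map fun ω => (X ω, Z ω)) :=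
        (lintegral_map hΦ (hX.prodMk hZ)).symm
    _ = ∫⁻ x, ∫⁻ z, Φ x z ∂(μ.map Z) ∂(μ.map X) := by
        rw [hXZ.map_prod_eq_prod_map_map hX.aemeasurable hZ.aemeasurable,
          lintegral_prod _ hΦ.aemeasurable]
        rfl
    _ = ∫⁻ ω, ∫⁻ z, Φ (X ω) z ∂(μ.map Z) ∂μ := lintegral_map hΦ.lintegral_prod_right' hX

variable {Y : ℕ → Ω → E} {X : ℕ → Ω → F} {Φ : ℕ → F → E → F} {x₀ : F}

theorem measurable_iSup_comap_of_recursion (hΦ : ∀ n, Measurable (Function.uncurry (Φ n)))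
    (h0 : ∀ ω, X 0 ω = x₀) (hrec : ∀ n ω, X (n + 1) ω = Φ n (X n ω) (Y (n + 1) ω)) (n : ℕ) :
    Measurable[⨆ i ≤ n, mE.comap (Y i)] (X n) := by
  induction n with
  | zero => rw [funext h0]; exact measurable_const
  | succ n ih =>
    rw [funext (hrec n)]
    refine (hΦ n).comp (Measurable.prodMk (ih.mono (biSup_mono fun i hi => by omega) le_rfl) ?_)
    exact (comap_measurable (Y (n + 1))).mono
      (le_iSup₂ (f := fun i (_ : i ≤ n + 1) => mE.comap (Y i)) (n + 1) le_rfl) le_rfl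

theorem ProbabilityTheory.iIndepFun.indepFun_of_recursion (hind : iIndepFun Y μ)
    (hY : ∀ n, Measurable (Y n)) (hΦ : ∀ n, Measurable (Function.uncurry (Φ n)))
    (h0 : ∀ ω, X 0 ω = x₀) (hrec : ∀ n ω, X (n + 1) ω = Φ n (X n ω) (Y (n + 1) ω)) (n : ℕ) :
    IndepFun (X n) (Y (n + 1)) μ := by
  have hI := indep_iSup_of_disjoint (fun i => (hY i).comap_le)
    ((iIndepFun_iff_iIndep _ _ _).1 hind) (S := Set.Iic n) (T := {n + 1}) (by simp)
  rw [IndepFun_iff_Indep]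
  refine indep_of_indep_of_le_right (indep_of_indep_of_le_left hI ?_) ?_
  · exact (measurable_iSup_comap_of_recursion hΦ h0 hrec n).comap_le
  · exact le_iSup₂ (f := fun i (_ : i ∈ ({n + 1} : Set ℕ)) => mE.comap (Y i)) (n + 1) rfl

end Recursion

theorem lipschitzWith_comp_sub_smul {E F : Type*} [PseudoEMetricSpace E] [NormedAddCommGroup F]
    [NormedSpace ℝ F] {H : F → E → F} {K : ℝ≥0} (hH : LipschitzWith K (Function.uncurry H))
    {f : F → ℝ} {L : ℝ≥0} (hf : LipschitzWith L f) (t : ℝ) (x : F) :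
    LipschitzWith (L * (‖t‖₊ * K)) fun e => f (x - t • H x e) := by
  have := hf.comp
    ((LipschitzWith.const x).sub ((lipschitzWith_smul t).comp (hH.of_uncurry_right x)))
  rwa [zero_add] at this

namespace RobbinsMonro

variable {Ω E F : Type*} [MeasurableSpace Ω] [MeasurableSpace E] [NormedAddCommGroup F]
  [InnerProductSpace ℝ F] {H : F → E → F}

/-- Only the innovations `Y (n + 1)` enter the scheme, so only they are required to have law `ν`. -/
structure IsScheme (μ : Measure Ω) (ν : Measure E) (H : F → E → F) (γ : ℕ → ℝ) (θ₀ : F)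
    (Y : ℕ → Ω → E) (θ : ℕ → Ω → F) : Prop where
  measurable_innovation : ∀ n, Measurable (Y n)
  iIndepFun_innovation : iIndepFun Y μ
  map_innovation : ∀ n, μ.map (Y (n + 1)) = ν
  zero : ∀ ω, θ 0 ω = θ₀
  succ : ∀ n ω, θ (n + 1) ω = θ n ω - γ (n + 1) • H (θ n ω) (Y (n + 1) ω)

variable [MeasurableSpace F] [BorelSpace F] [SecondCountableTopology F] {μ : Measure Ω}
  {ν : Measure E} {γ : ℕ → ℝ} {θ₀ : F} {Y : ℕ → Ω → E} {θ : ℕ → Ω → F}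

theorem measurable_step (hH : Measurable (Function.uncurry H)) (t : ℝ) :
    Measurable (Function.uncurry fun x e => x - t • H x e) :=
  measurable_fst.sub (hH.const_smul t)

theorem IsScheme.measurable (hS : IsScheme μ ν H γ θ₀ Y θ) (hH : Measurable (Function.uncurry H))
    (n : ℕ) : Measurable (θ n) :=
  (measurable_iSup_comap_of_recursion (Φ := fun n x e => x - γ (n + 1) • H x e)
    (fun _ => measurable_step hH _) hS.zero hS.succ n).mono
    (iSup₂_le fun i _ => (hS.measurable_innovation i).comap_le) le_rfl

theorem IsScheme.lintegral_comp_succ [IsProbabilityMeasure μ] (hS : IsScheme μ ν H γ θ₀ Y θ)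
    (hH : Measurable (Function.uncurry H)) (n : ℕ) {Ψ : F → ℝ≥0∞} (hΨ : Measurable Ψ) :
    ∫⁻ ω, Ψ (θ (n + 1) ω) ∂μ = ∫⁻ ω, ∫⁻ e, Ψ (θ n ω - γ (n + 1) • H (θ n ω) e) ∂ν ∂μ := by
  have hindep := hS.iIndepFun_innovation.indepFun_of_recursion
    (Φ := fun n x e => x - γ (n + 1) • H x e) hS.measurable_innovation
    (fun _ => measurable_step hH _) hS.zero hS.succ n
  simp_rw [hS.succ n, ← hS.map_innovation n]
  exact hindep.lintegral_comp_eq (Φ := fun x e => Ψ (x - γ (n + 1) • H x e))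
    (hS.measurable hH n) (hS.measurable_innovation _) (hΨ.comp (measurable_step hH _))

theorem measurable_transition [SFinite ν] (hH : Measurable (Function.uncurry H)) {f : F → ℝ}
    (hf : Measurable f) (t : ℝ) : Measurable (transition ν H t f) :=
  (hf.comp (measurable_step hH t)).stronglyMeasurable.integral_prod_right'.measurable

variable [IsProbabilityMeasure μ] [NormedAddCommGroup E] [BorelSpace E] [IsProbabilityMeasure ν]
  {K : ℝ≥0} {α : ℝ}

theorem IsScheme.integral_comp_succ (hS : IsScheme μ ν H γ θ₀ Y θ)
    (hν : GaussianConcentration α ν) (hH : LipschitzWith K (Function.uncurry H)) (n : ℕ)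
    {f : F → ℝ} (hf0 : 0 ≤ f) {L : ℝ≥0} (hf : LipschitzWith L f) :
    ∫ ω, f (θ (n + 1) ω) ∂μ = ∫ ω, transition ν H (γ (n + 1)) f (θ n ω) ∂μ := by
  have hHm : Measurable (Function.uncurry H) := hH.continuous.measurable
  have hθ := hS.measurable hHm
  rw [integral_eq_lintegral_of_nonneg_ae (ae_of_all _ fun ω => hf0 (θ (n + 1) ω))
      (hf.continuous.measurable.comp (hθ _)).aestronglyMeasurable,
    integral_eq_lintegral_of_nonneg_ae (f := fun ω => transition ν H (γ (n + 1)) f (θ n ω))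
      (ae_of_all _ fun ω => integral_nonneg fun e => hf0 _)
      ((measurable_transition hHm hf.continuous.measurable _).comp (hθ n)).aestronglyMeasurable,
    hS.lintegral_comp_succ hHm n (Ψ := fun x => ENNReal.ofReal (f x))
      hf.continuous.measurable.ennreal_ofReal]
  congr 1
  refine lintegral_congr fun ω => ?_
  rw [transition, ofReal_integral_eq_lintegral_ofReal
    (hν.integrable_of_lipschitz (lipschitzWith_comp_sub_smul hH hf _ _))
    (ae_of_all _ fun e => hf0 _)]

theorem IsScheme.lintegral_exp_comp_succ_le (hS : IsScheme μ ν H γ θ₀ Y θ)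
    (hν : GaussianConcentration α ν) (hH : LipschitzWith K (Function.uncurry H)) (n : ℕ)
    {f : F → ℝ} {L : ℝ≥0} (hf : LipschitzWith L f) {l : ℝ} (hl : 0 ≤ l) :
    ∫⁻ ω, ENNReal.ofReal (exp (l * f (θ (n + 1) ω))) ∂μ ≤
      ENNReal.ofReal (exp (α * K ^ 2 * L ^ 2 * γ (n + 1) ^ 2 * l ^ 2 / 4)) *
        ∫⁻ ω, ENNReal.ofReal (exp (l * transition ν H (γ (n + 1)) f (θ n ω))) ∂μ := by
  have hHm : Measurable (Function.uncurry H) := hH.continuous.measurable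
  rw [hS.lintegral_comp_succ hHm n (Ψ := fun x => ENNReal.ofReal (exp (l * f x)))
    (hf.continuous.measurable.const_mul l).exp.ennreal_ofReal, ← lintegral_const_mul _
    (f := fun ω => ENNReal.ofReal (exp (l * transition ν H (γ (n + 1)) f (θ n ω))))
    (((measurable_transition hHm hf.continuous.measurable _).comp
      (hS.measurable hHm n)).const_mul l).exp.ennreal_ofReal]
  refine lintegral_mono fun ω => ?_
  have hlip := lipschitzWith_comp_sub_smul hH hf (γ (n + 1)) (θ n ω)
  rw [← ofReal_integral_eq_lintegral_ofReal (hν.integrable_exp_of_lipschitz hlip l)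
    (ae_of_all _ fun _ => (exp_pos _).le), ← ENNReal.ofReal_mul (exp_pos _).le, ← exp_add]
  refine ENNReal.ofReal_le_ofReal ((hν.integral_exp_le hlip hl).trans (exp_le_exp.2 (le_of_eq ?_)))
  push_cast
  rw [norm_eq_abs, mul_pow, mul_pow, sq_abs, transition]
  ring

theorem IsScheme.lintegral_exp_le [CompleteSpace F] (hS : IsScheme μ ν H γ θ₀ Y θ)
    (hν : GaussianConcentration α ν) (hH : LipschitzWith K (Function.uncurry H)) {h : F → F}
    (hdef : ∀ x, h x = ∫ e, H x e ∂ν) {lam : ℝ}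
    (hmono : ∀ a b, lam * ‖a - b‖ ^ 2 ≤ ⟪h a - h b, a - b⟫) (hγ : ∀ n, 0 ≤ γ (n + 1))
    (hc : ∀ n, 0 ≤ contractionFactor lam K (γ (n + 1))) (n : ℕ) {f : F → ℝ} (hf0 : 0 ≤ f)
    {L : ℝ≥0} (hf : LipschitzWith L f) {l : ℝ} (hl : 0 ≤ l) :
    ∫⁻ ω, ENNReal.ofReal (exp (l * f (θ n ω))) ∂μ ≤ ENNReal.ofReal (exp (l * ∫ ω, f (θ n ω) ∂μ +
      α * K ^ 2 * L ^ 2 * varianceProxy lam K γ n * l ^ 2 / 4)) := by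
  induction n generalizing f L with
  | zero => simp [hS.zero, varianceProxy]
  | succ n ih =>
    have hPf := lipschitzWith_transition
      (fun x => hν.integrable_of_lipschitz (hH.of_uncurry_right x)) hH.of_uncurry_left hdef hmono
      (hγ n) hf fun x => hν.integrable_of_lipschitz (lipschitzWith_comp_sub_smul hH hf _ x)
    have hPf0 : 0 ≤ transition ν H (γ (n + 1)) f := fun x => integral_nonneg fun e => hf0 _
    have hIH := ih hPf0 hPf
    calc ∫⁻ ω, ENNReal.ofReal (exp (l * f (θ (n + 1) ω))) ∂μ
        ≤ ENNReal.ofReal (exp (α * K ^ 2 * L ^ 2 * γ (n + 1) ^ 2 * l ^ 2 / 4)) *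
            ∫⁻ ω, ENNReal.ofReal (exp (l * transition ν H (γ (n + 1)) f (θ n ω))) ∂μ :=
          hS.lintegral_exp_comp_succ_le hν hH n hf hl
      _ ≤ ENNReal.ofReal (exp (α * K ^ 2 * L ^ 2 * γ (n + 1) ^ 2 * l ^ 2 / 4)) *
            ENNReal.ofReal (exp (l * ∫ ω, transition ν H (γ (n + 1)) f (θ n ω) ∂μ +
              α * K ^ 2 * (L * NNReal.sqrt (contractionFactor lam K (γ (n + 1))).toNNReal) ^ 2 *
                varianceProxy lam K γ n * l ^ 2 / 4)) :=
          mul_le_mul_right hIH _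
      _ = ENNReal.ofReal (exp (l * ∫ ω, f (θ (n + 1) ω) ∂μ +
            α * K ^ 2 * L ^ 2 * varianceProxy lam K γ (n + 1) * l ^ 2 / 4)) := by
          rw [← ENNReal.ofReal_mul (exp_pos _).le, ← exp_add, hS.integral_comp_succ hν hH n hf0 hf]
          push_cast
          rw [mul_pow, Real.sq_sqrt NNReal.zero_le_coe, Real.coe_toNNReal _ (hc n), varianceProxy]
          ring_nf

theorem IsScheme.measure_ge_le [CompleteSpace F] [Nontrivial F] (hS : IsScheme μ ν H γ θ₀ Y θ)
    (hν : GaussianConcentration α ν) (hα : 0 < α) (hH : LipschitzWith K (Function.uncurry H))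
    (hK : K ≠ 0) {h : F → F} (hdef : ∀ x, h x = ∫ e, H x e ∂ν) {lam : ℝ}
    (hmono : ∀ a b, lam * ‖a - b‖ ^ 2 ≤ ⟪h a - h b, a - b⟫) (hγ : ∀ n, 0 < γ (n + 1)) {N : ℕ}
    (hN : N ≠ 0) {g : F → ℝ} (hg0 : 0 ≤ g) {L : ℝ≥0} (hL : L ≠ 0) (hg : LipschitzWith L g)
    {r : ℝ} (hr : 0 ≤ r) :
    μ {ω | r + ∫ ω', g (θ N ω') ∂μ ≤ g (θ N ω)} ≤
      ENNReal.ofReal (exp (-r ^ 2 / (α * K ^ 2 * L ^ 2 * varianceProxy lam K γ N))) := by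
  have hc : ∀ n, 0 ≤ contractionFactor lam K (γ (n + 1)) := fun n =>
    contractionFactor_nonneg (fun x => hν.integrable_of_lipschitz (hH.of_uncurry_right x))
      hH.of_uncurry_left hdef hmono (hγ n).le
  have hA : 0 < α * K ^ 2 * L ^ 2 * varianceProxy lam K γ N := by
    have := varianceProxy_pos hc (fun n => (hγ n).ne') hN
    positivity
  exact measure_ge_le_exp_of_lintegral_exp_le
    (hg.continuous.measurable.comp (hS.measurable hH.continuous.measurable N)).aemeasurable hA
    (fun l hl => hS.lintegral_exp_le hν hH hdef hmono (fun n => (hγ n).le) hc N hg0 hg hl) hr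

end RobbinsMonro

theorem robbins_monro_concentration_general
    {Ω : Type*} [m0 : MeasurableSpace Ω] (μ : Measure Ω) [IsProbabilityMeasure μ]
    {d q : ℕ} (α : ℝ) (hα : 0 < α)
    (Y : ℕ → Ω → EuclideanSpace ℝ (Fin q)) (hYmeas : ∀ i, Measurable (Y i))
    (hiid : iIndepFun Y μ)
    (hident : ∀ i, IdentDistrib (Y i) (Y 1) μ μ)
    (hGC : ∀ f : EuclideanSpace ℝ (Fin q) → ℝ, LipschitzWith 1 f → ∀ l : ℝ, 0 ≤ l →
      ∫ ω, Real.exp (l * f (Y 1 ω)) ∂μ ≤ Real.exp (l * ∫ ω, f (Y 1 ω) ∂μ + α * l ^ 2 / 4))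
    (H : EuclideanSpace ℝ (Fin d) → EuclideanSpace ℝ (Fin q) → EuclideanSpace ℝ (Fin d))
    (KH : ℝ) (hKH : 0 < KH)
    -- (HL): `H` is uniformly Lipschitz in `(θ, y)`
    (hHlip : LipschitzWith (Real.toNNReal KH)
      (fun p : EuclideanSpace ℝ (Fin d) × EuclideanSpace ℝ (Fin q) => H p.1 p.2))
    (h : EuclideanSpace ℝ (Fin d) → EuclideanSpace ℝ (Fin d))
    (hdef : ∀ θ', h θ' = ∫ ω, H θ' (Y 1 ω) ∂μ)
    -- (HUA): `h` is `C¹` and uniformly attractive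
    (hC1 : ContDiff ℝ 1 h) (lam : ℝ)
    (hattract : ∀ θ' ξ, lam * ‖ξ‖ ^ 2 ≤ ⟪fderiv ℝ h θ' ξ, ξ⟫)
    (θstar : EuclideanSpace ℝ (Fin d))
    -- step sequence
    (γ : ℕ → ℝ) (hγpos : ∀ n, 1 ≤ n → 0 < γ n)
    -- the Robbins–Monro scheme
    (θ0 : EuclideanSpace ℝ (Fin d)) (θ : ℕ → Ω → EuclideanSpace ℝ (Fin d))
    (hinit : ∀ ω, θ 0 ω = θ0)
    (hrec : ∀ n ω, θ (n + 1) ω = θ n ω - γ (n + 1) • H (θ n ω) (Y (n + 1) ω)) :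
    ∀ N : ℕ, 1 ≤ N → ∀ r : ℝ, 0 ≤ r →
      μ {ω | r + ∫ ω', ‖θ N ω' - θstar‖ ∂μ ≤ ‖θ N ω - θstar‖} ≤
        ENNReal.ofReal (Real.exp (-r ^ 2 /
          (α * KH ^ 2 *
            (∏ k ∈ Finset.range N, (1 - 2 * lam * γ (k + 1) + KH ^ 2 * γ (k + 1) ^ 2)) *
            ∑ k ∈ Finset.Icc 1 N, γ k ^ 2 /
              ∏ j ∈ Finset.range k, (1 - 2 * lam * γ (j + 1) + KH ^ 2 * γ (j + 1) ^ 2)))) := by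
  intro N hN r hr
  rcases subsingleton_or_nontrivial (EuclideanSpace ℝ (Fin d)) with hF | hF
  · have hzero : ∀ x : EuclideanSpace ℝ (Fin d), ‖x - θstar‖ = 0 := fun x => by
      rw [Subsingleton.elim x θstar, sub_self, norm_zero]
    rcases hr.eq_or_lt with rfl | hr
    · simpa using prob_le_one
    · simp [hzero, not_le.2 hr]
  by_cases hP : ∏ k ∈ Finset.range N, RobbinsMonro.contractionFactor lam KH (γ (k + 1)) = 0
  · simp only [RobbinsMonro.contractionFactor] at hP
    simpa [hP] using prob_le_one
  set ν := μ.map (Y 1)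
  have : IsProbabilityMeasure ν := Measure.isProbabilityMeasure_map (hYmeas 1).aemeasurable
  have hS : RobbinsMonro.IsScheme μ ν H γ θ0 Y θ :=
    ⟨hYmeas, hiid, fun n => (hident (n + 1)).map_eq, hinit, hrec⟩
  have hν : GaussianConcentration α ν :=
    (gaussianConcentration_map_iff (hYmeas 1).aemeasurable).2 hGC
  have hdefν : ∀ x, h x = ∫ e, H x e ∂ν := fun x => by
    rw [hdef, integral_map (hYmeas 1).aemeasurable
      (hHlip.of_uncurry_right x).continuous.aestronglyMeasurable]
  have hdist : LipschitzWith 1 fun x : EuclideanSpace ℝ (Fin d) => ‖x - θstar‖ := by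
    have := lipschitzWith_one_norm.comp (LipschitzWith.id.sub (LipschitzWith.const θstar))
    rwa [add_zero, mul_one] at this
  have := hS.measure_ge_le hν hα hHlip (by simpa using hKH) hdefν
    (mul_norm_sub_sq_le_inner_sub_of_fderiv (hC1.differentiable one_ne_zero) hattract)
    (fun n => hγpos _ le_add_self) (Nat.one_le_iff_ne_zero.1 hN) (fun _ => norm_nonneg _)
    one_ne_zero hdist hr
  rwa [Real.coe_toNNReal _ hKH.le, RobbinsMonro.varianceProxy_eq hP, NNReal.coe_one, one_pow,
    mul_one, ← mul_assoc] at this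

/-- non-asymptotic Gaussian concentration bound for the
Robbins–Monro algorithm. -/
theorem robbins_monro_concentration
    {Ω : Type*} [m0 : MeasurableSpace Ω] (μ : Measure Ω) [IsProbabilityMeasure μ]
    {d q : ℕ} (α : ℝ) (hα : 0 < α)
    (Y : ℕ → Ω → EuclideanSpace ℝ (Fin q)) (hYmeas : ∀ i, Measurable (Y i))
    (hiid : iIndepFun Y μ)
    (hident : ∀ i, IdentDistrib (Y i) (Y 1) μ μ)
    (hGC : ∀ f : EuclideanSpace ℝ (Fin q) → ℝ, LipschitzWith 1 f → ∀ l : ℝ, 0 ≤ l →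
      ∫ ω, Real.exp (l * f (Y 1 ω)) ∂μ ≤ Real.exp (l * ∫ ω, f (Y 1 ω) ∂μ + α * l ^ 2 / 4))
    (H : EuclideanSpace ℝ (Fin d) → EuclideanSpace ℝ (Fin q) → EuclideanSpace ℝ (Fin d))
    (KH : ℝ) (hKH : 0 < KH)
    -- (HL): `H` is uniformly Lipschitz in `(θ, y)`
    (hHlip : LipschitzWith (Real.toNNReal KH)
      (fun p : EuclideanSpace ℝ (Fin d) × EuclideanSpace ℝ (Fin q) => H p.1 p.2))
    (h : EuclideanSpace ℝ (Fin d) → EuclideanSpace ℝ (Fin d))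
    (hdef : ∀ θ', h θ' = ∫ ω, H θ' (Y 1 ω) ∂μ)
    -- (HUA): `h` is `C¹` and uniformly attractive
    (hC1 : ContDiff ℝ 1 h) (lam : ℝ) (hlam : 0 < lam)
    (hattract : ∀ θ' ξ, lam * ‖ξ‖ ^ 2 ≤ ⟪fderiv ℝ h θ' ξ, ξ⟫)
    (θstar : EuclideanSpace ℝ (Fin d)) (hroot : h θstar = 0)
    -- step sequence
    (γ : ℕ → ℝ) (hγpos : ∀ n, 1 ≤ n → 0 < γ n)
    (hγdiv : ¬ Summable γ) (hγsq : Summable (fun n => γ n ^ 2))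
    -- the Robbins–Monro scheme
    (θ0 : EuclideanSpace ℝ (Fin d)) (θ : ℕ → Ω → EuclideanSpace ℝ (Fin d))
    (hinit : ∀ ω, θ 0 ω = θ0)
    (hrec : ∀ n ω, θ (n + 1) ω = θ n ω - γ (n + 1) • H (θ n ω) (Y (n + 1) ω)) :
    ∀ N : ℕ, 1 ≤ N → ∀ r : ℝ, 0 ≤ r →
      μ {ω | r + ∫ ω', ‖θ N ω' - θstar‖ ∂μ ≤ ‖θ N ω - θstar‖} ≤
        ENNReal.ofReal (Real.exp (-r ^ 2 /
          (α * KH ^ 2 *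
            (∏ k ∈ Finset.range N, (1 - 2 * lam * γ (k + 1) + KH ^ 2 * γ (k + 1) ^ 2)) *
            ∑ k ∈ Finset.Icc 1 N, γ k ^ 2 /
              ∏ j ∈ Finset.range k, (1 - 2 * lam * γ (j + 1) + KH ^ 2 * γ (j + 1) ^ 2)))) :=
  robbins_monro_concentration_general (m0 := m0) μ α hα Y hYmeas hiid hident hGC H KH hKH hHlip h
    hdef hC1 lam hattract θstar γ hγpos θ0 θ hinit hrec
end

section
/- Under the uniform Lipschitz assumption on H and uniform attractivity of h, the two-flow L²-sensitivity bound holds: for starting points θ, θ' at step i ≤ n, E[|θ_n^{θ,i} − θ_n^{θ',i}|²] ≤ |θ − θ'|² ∏_{j=i}^{n−1}(1 − 2λ̲γ_{j+1} + [H]₁² γ_{j+1}²). -/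
/-!
Write `Δⱼ = θⱼ - θ'ⱼ`, so that `Δⱼ₊₁ = Δⱼ - γⱼ₊₁ (H(θⱼ, Yⱼ₊₁) - H(θ'ⱼ, Yⱼ₊₁))`. The pair
`(θⱼ, θ'ⱼ)` is a function of `Yᵢ₊₁, …, Yⱼ`, hence independent of `Yⱼ₊₁`, so the mean square of
`Δⱼ₊₁` is obtained by integrating against the law of `Y₁` with the pair frozen. Expanding the
square, the cross term is controlled by the strong monotonicity
`⟪h a - h b, a - b⟫ ≥ λ‖a - b‖²` (the attractivity bound on `Dh` integrated along a segment) and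
the quadratic term by the Lipschitz bound, which gives the factor `1 - 2λγ + [H]₁²γ²` per step.
-/

open MeasureTheory Real ProbabilityTheory
open scoped RealInnerProductSpace ENNReal NNReal

theorem le_inner_sub_sub_of_le_inner_fderiv {E : Type*} [NormedAddCommGroup E]
    [InnerProductSpace ℝ E] {f : E → E} (hf : Differentiable ℝ f) {lam : ℝ}
    (hf' : ∀ x ξ, lam * ‖ξ‖ ^ 2 ≤ ⟪fderiv ℝ f x ξ, ξ⟫) (a b : E) :
    lam * ‖a - b‖ ^ 2 ≤ ⟪f a - f b, a - b⟫ := by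
  set ξ := a - b
  have hderiv (t : ℝ) :
      HasDerivAt (fun t : ℝ => ⟪f (b + t • ξ), ξ⟫) ⟪fderiv ℝ f (b + t • ξ) ξ, ξ⟫ t := by
    have hline : HasDerivAt (fun t : ℝ => b + t • ξ) ξ t := by
      simpa using ((hasDerivAt_id t).smul_const ξ).const_add b
    simpa using ((hf _).hasFDerivAt.comp_hasDerivAt t hline).inner ℝ (hasDerivAt_const t ξ)
  have := mul_sub_le_image_sub_of_le_deriv (fun t => (hderiv t).differentiableAt)
    (fun t => (hderiv t).deriv ▸ hf' _ ξ) zero_le_one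
  simpa [ξ, inner_sub_left] using this

theorem MeasureTheory.Integrable.of_lipschitzWith_param {P α E : Type*} [PseudoMetricSpace P]
    [MeasurableSpace α] {μ : Measure α} [IsFiniteMeasure μ] [NormedAddCommGroup E]
    {F : P → α → E} {K : ℝ≥0} (hF : ∀ x, LipschitzWith K (F · x)) {a b : P} (ha : Integrable (F a) μ)
    (hb : AEStronglyMeasurable (F b) μ) : Integrable (F b) μ := by
  have hdiff : Integrable (F b - F a) μ :=
    .of_bound (hb.sub ha.1) (K * dist b a) (ae_of_all _ fun x => by
      simpa [dist_eq_norm] using (hF x).dist_le_mul b a)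
  simpa using ha.add hdiff

theorem MeasureTheory.Integrable.norm_sq_of_bound {α E : Type*} [MeasurableSpace α]
    {μ : Measure α} [IsFiniteMeasure μ] [NormedAddCommGroup E] {g : α → E}
    (hg : AEStronglyMeasurable g μ) {C : ℝ} (hC : ∀ x, ‖g x‖ ≤ C) : Integrable (fun x => ‖g x‖ ^ 2) μ :=
  .of_bound (hg.norm.pow 2) (C ^ 2) (ae_of_all _ fun x => by
    simpa using pow_le_pow_left₀ (norm_nonneg _) (hC x) 2)

theorem MeasureTheory.Integrable.of_le_inner_fderiv_integral {α E : Type*} [MeasurableSpace α]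
    {μ : Measure α} [IsFiniteMeasure μ] [NormedAddCommGroup E] [InnerProductSpace ℝ E]
    [Nontrivial E] {F : E → α → E} {K : ℝ≥0}
    (hF : ∀ x, LipschitzWith K (F · x)) (hmeas : ∀ a, AEStronglyMeasurable (F a) μ)
    {lam : ℝ} (hlam : 0 < lam)
    (hattract : ∀ x ξ, lam * ‖ξ‖ ^ 2 ≤ ⟪fderiv ℝ (fun a => ∫ ω, F a ω ∂μ) x ξ, ξ⟫) (a : E) :
    Integrable (F a) μ := by
  by_contra ha
  -- otherwise no `F b` is integrable and the mean field is the junk value `0`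
  have hzero : (fun b => ∫ ω, F b ω ∂μ) = 0 :=
    funext fun b => integral_undef fun hb => ha (hb.of_lipschitzWith_param hF (hmeas a))
  obtain ⟨ξ, hξ⟩ := exists_ne (0 : E)
  have := hattract 0 ξ
  simp only [hzero, fderiv_zero, Pi.zero_apply, zero_apply,
    inner_zero_left] at this
  exact this.not_gt (mul_pos hlam (pow_pos (norm_pos_iff.2 hξ) 2))

theorem integral_le_of_lintegral_ofReal_le {α : Type*} [MeasurableSpace α] {μ : Measure α}
    {f : α → ℝ} (hf : ∀ x, 0 ≤ f x) {B : ℝ} (hB : 0 ≤ B)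
    (h : ∫⁻ x, ENNReal.ofReal (f x) ∂μ ≤ ENNReal.ofReal B) : ∫ x, f x ∂μ ≤ B := by
  by_cases hfi : Integrable f μ
  · rwa [← ENNReal.ofReal_le_ofReal_iff hB,
      ofReal_integral_eq_lintegral_ofReal hfi (ae_of_all _ hf)]
  · rwa [integral_undef hfi]

theorem integrable_norm_sub_smul_sub_sq {E β : Type*} [NormedAddCommGroup E] [NormedSpace ℝ E]
    [MeasurableSpace β] {ρ : Measure β} [IsFiniteMeasure ρ] {F : E → β → E} {K : ℝ≥0}
    (hF : ∀ y, LipschitzWith K (F · y)) (hint : ∀ a, Integrable (F a) ρ) (γ : ℝ) (a b : E) :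
    Integrable (fun y => ‖a - b - γ • (F a y - F b y)‖ ^ 2) ρ := by
  refine .norm_sq_of_bound ((integrable_const _).sub (((hint a).sub (hint b)).smul γ)).1
    (C := ‖a - b‖ + |γ| * (K * ‖a - b‖)) fun y => (norm_sub_le _ _).trans ?_
  rw [norm_smul, Real.norm_eq_abs]
  gcongr
  simpa [dist_eq_norm] using (hF y).dist_le_mul a b

section OneStep

variable {E β : Type*} [NormedAddCommGroup E] [InnerProductSpace ℝ E] [CompleteSpace E]
  [MeasurableSpace β] {ρ : Measure β} [IsProbabilityMeasure ρ] {F : E → β → E} {K : ℝ≥0}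

theorem integral_norm_sub_smul_sub_sq_le (hF : ∀ y, LipschitzWith K (F · y))
    (hint : ∀ a, Integrable (F a) ρ) {lam : ℝ}
    (hmono : ∀ a b, lam * ‖a - b‖ ^ 2 ≤ ⟪∫ y, F a y ∂ρ - ∫ y, F b y ∂ρ, a - b⟫)
    {γ : ℝ} (hγ : 0 ≤ γ) (a b : E) :
    ∫ y, ‖a - b - γ • (F a y - F b y)‖ ^ 2 ∂ρ ≤
      (1 - 2 * lam * γ + K ^ 2 * γ ^ 2) * ‖a - b‖ ^ 2 := by
  set u := a - b
  set G := fun y => F a y - F b y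
  have hG : Integrable G ρ := (hint a).sub (hint b)
  have hGle (y : β) : ‖G y‖ ≤ K * ‖u‖ := by
    simpa [dist_eq_norm] using (hF y).dist_le_mul a b
  have hinner : Integrable (fun y => ⟪u, G y⟫) ρ := hG.const_inner u
  have hsq : Integrable (fun y => ‖G y‖ ^ 2) ρ := .norm_sq_of_bound hG.1 hGle
  have hdrift : lam * ‖u‖ ^ 2 ≤ ∫ y, ⟪u, G y⟫ ∂ρ := by
    rw [integral_inner hG, integral_sub (hint a) (hint b), real_inner_comm]
    exact hmono a b
  have hnoise : ∫ y, ‖G y‖ ^ 2 ∂ρ ≤ K ^ 2 * ‖u‖ ^ 2 := calc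
    _ ≤ ∫ _, (K * ‖u‖) ^ 2 ∂ρ := integral_mono hsq (integrable_const _) fun y =>
      pow_le_pow_left₀ (norm_nonneg _) (hGle y) 2
    _ = _ := by simp [mul_pow]
  calc ∫ y, ‖u - γ • G y‖ ^ 2 ∂ρ
      = ∫ y, (‖u‖ ^ 2 - 2 * γ * ⟪u, G y⟫ + γ ^ 2 * ‖G y‖ ^ 2) ∂ρ := by
        congr 1; ext y
        rw [norm_sub_sq_real, real_inner_smul_right, norm_smul, mul_pow, Real.norm_eq_abs, sq_abs]
        ring
    _ = ‖u‖ ^ 2 - 2 * γ * ∫ y, ⟪u, G y⟫ ∂ρ + γ ^ 2 * ∫ y, ‖G y‖ ^ 2 ∂ρ := by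
        have hdet : Integrable (fun y => ‖u‖ ^ 2 - 2 * γ * ⟪u, G y⟫) ρ :=
          (integrable_const _).sub (hinner.const_mul _)
        rw [integral_add hdet (hsq.const_mul _), integral_sub (integrable_const _)
          (hinner.const_mul _), integral_const_mul, integral_const_mul]
        simp
    _ ≤ _ := by
        nlinarith [mul_le_mul_of_nonneg_left hdrift hγ,
          mul_le_mul_of_nonneg_left hnoise (sq_nonneg γ)]

theorem lintegral_ofReal_norm_sub_smul_sub_sq_le (hF : ∀ y, LipschitzWith K (F · y))
    (hint : ∀ a, Integrable (F a) ρ) {lam : ℝ}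
    (hmono : ∀ a b, lam * ‖a - b‖ ^ 2 ≤ ⟪∫ y, F a y ∂ρ - ∫ y, F b y ∂ρ, a - b⟫)
    {γ : ℝ} (hγ : 0 ≤ γ) (a b : E) :
    ∫⁻ y, ENNReal.ofReal (‖a - b - γ • (F a y - F b y)‖ ^ 2) ∂ρ ≤
      ENNReal.ofReal (1 - 2 * lam * γ + K ^ 2 * γ ^ 2) * ENNReal.ofReal (‖a - b‖ ^ 2) := by
  rw [← ofReal_integral_eq_lintegral_ofReal (integrable_norm_sub_smul_sub_sq hF hint γ a b)
    (ae_of_all _ fun _ => sq_nonneg _), ← ENNReal.ofReal_mul' (sq_nonneg _)]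
  exact ENNReal.ofReal_le_ofReal (integral_norm_sub_smul_sub_sq_le hF hint hmono hγ a b)

theorem one_sub_two_mul_add_sq_mul_sq_nonneg [Nontrivial E] (hF : ∀ y, LipschitzWith K (F · y))
    (hint : ∀ a, Integrable (F a) ρ) {lam : ℝ}
    (hmono : ∀ a b, lam * ‖a - b‖ ^ 2 ≤ ⟪∫ y, F a y ∂ρ - ∫ y, F b y ∂ρ, a - b⟫)
    {γ : ℝ} (hγ : 0 ≤ γ) : 0 ≤ 1 - 2 * lam * γ + K ^ 2 * γ ^ 2 := by
  obtain ⟨ξ, hξ⟩ := exists_ne (0 : E)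
  refine nonneg_of_mul_nonneg_left ?_ (pow_pos (norm_pos_iff.2 (sub_ne_zero.2 hξ)) 2)
  exact (integral_nonneg fun _ => sq_nonneg _).trans
    (integral_norm_sub_smul_sub_sq_le hF hint hmono hγ ξ 0)

end OneStep

theorem lintegral_comp_le_of_indepFun {Ω α β : Type*} [MeasurableSpace Ω] [MeasurableSpace α]
    [MeasurableSpace β] {μ : Measure Ω} [IsFiniteMeasure μ] {X : Ω → α} {Z : Ω → β}
    (hX : Measurable X) (hZ : Measurable Z) (hXZ : IndepFun X Z μ) {Φ : α → β → ℝ≥0∞}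
    (hΦ : Measurable (Function.uncurry Φ)) {g : α → ℝ≥0∞} (hg : Measurable g) {c : ℝ≥0∞}
    (hle : ∀ x, ∫⁻ y, Φ x y ∂(μ.map Z) ≤ c * g x) :
    ∫⁻ ω, Φ (X ω) (Z ω) ∂μ ≤ c * ∫⁻ ω, g (X ω) ∂μ := calc
  _ = ∫⁻ p, Function.uncurry Φ p ∂(μ.map fun ω => (X ω, Z ω)) :=
    (lintegral_map hΦ (hX.prodMk hZ)).symm
  _ = ∫⁻ x, ∫⁻ y, Φ x y ∂(μ.map Z) ∂(μ.map X) := by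
    rw [hXZ.map_prod_eq_prod_map_map hX.aemeasurable hZ.aemeasurable,
      lintegral_prod _ hΦ.aemeasurable]
    rfl
  _ ≤ ∫⁻ x, c * g x ∂(μ.map X) := lintegral_mono hle
  _ = c * ∫⁻ ω, g (X ω) ∂μ := by rw [lintegral_const_mul _ hg, lintegral_map hg hX]

theorem ProbabilityTheory.iIndepFun.indepFun_succ_of_measurable_past {Ω α β : Type*}
    [MeasurableSpace Ω] [MeasurableSpace α] {mβ : MeasurableSpace β} {μ : Measure Ω} {Y : ℕ → Ω → β}
    (hY : ∀ k, Measurable (Y k)) (hind : iIndepFun Y μ) {j : ℕ} {X : Ω → α}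
    (hX : Measurable[⨆ k ∈ Set.Iic j, mβ.comap (Y k)] X) : IndepFun X (Y (j + 1)) μ := by
  have := indep_iSup_of_disjoint (fun k => (hY k).comap_le) hind.iIndep
    (S := Set.Iic j) (T := {j + 1}) (by simp)
  rw [iSup_singleton] at this
  exact (IndepFun_iff_Indep _ _ _).2 (indep_of_indep_of_le_left this hX.comap_le)

section Flow

variable {Ω E β : Type*} [NormedAddCommGroup E] [NormedSpace ℝ E] [MeasurableSpace E]
  [BorelSpace E] [SecondCountableTopology E] {mβ : MeasurableSpace β} {Y : ℕ → Ω → β}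
  {H : E → β → E} {γ : ℕ → ℝ} {i : ℕ}

theorem measurable_iSup_comap_of_rec (hH : Measurable (Function.uncurry H)) {θ : ℕ → Ω → E}
    {θ₀ : E} (hinit : ∀ ω, θ i ω = θ₀)
    (hrec : ∀ j ω, i ≤ j → θ (j + 1) ω = θ j ω - γ (j + 1) • H (θ j ω) (Y (j + 1) ω))
    {n : ℕ} (hin : i ≤ n) : Measurable[⨆ k ∈ Set.Iic n, mβ.comap (Y k)] (θ n) := by
  induction n, hin using Nat.le_induction with
  | base =>
    rw [show θ i = fun _ => θ₀ from funext hinit]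
    exact measurable_const
  | succ n hn ih =>
    have hθ : Measurable[⨆ k ∈ Set.Iic (n + 1), mβ.comap (Y k)] (θ n) :=
      ih.mono (biSup_mono fun k hk => Set.mem_Iic.2 (Nat.le_succ_of_le hk)) le_rfl
    have hYn : Measurable[⨆ k ∈ Set.Iic (n + 1), mβ.comap (Y k)] (Y (n + 1)) :=
      Measurable.of_comap_le (le_biSup (fun k => mβ.comap (Y k)) (Set.mem_Iic.2 le_rfl))
    rw [show θ (n + 1) = fun ω => θ n ω - γ (n + 1) • H (θ n ω) (Y (n + 1) ω) from
      funext fun ω => hrec n ω hn]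
    exact hθ.sub ((hH.comp (hθ.prodMk hYn)).const_smul (γ (n + 1)))

theorem lintegral_ofReal_norm_sub_sq_le_prod [MeasurableSpace Ω] {μ : Measure Ω}
    [IsProbabilityMeasure μ]
    (hY : ∀ k, Measurable (Y k)) (hind : iIndepFun Y μ) (hH : Measurable (Function.uncurry H))
    {c : ℕ → ℝ}
    (hstep : ∀ j, i ≤ j → ∀ a b : E,
      ∫⁻ y, ENNReal.ofReal (‖a - b - γ (j + 1) • (H a y - H b y)‖ ^ 2) ∂(μ.map (Y (j + 1))) ≤
        ENNReal.ofReal (c j) * ENNReal.ofReal (‖a - b‖ ^ 2))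
    {θa θb : ℕ → Ω → E} {θ θ' : E} (hinita : ∀ ω, θa i ω = θ) (hinitb : ∀ ω, θb i ω = θ')
    (hreca : ∀ j ω, i ≤ j → θa (j + 1) ω = θa j ω - γ (j + 1) • H (θa j ω) (Y (j + 1) ω))
    (hrecb : ∀ j ω, i ≤ j → θb (j + 1) ω = θb j ω - γ (j + 1) • H (θb j ω) (Y (j + 1) ω))
    {n : ℕ} (hin : i ≤ n) :
    ∫⁻ ω, ENNReal.ofReal (‖θa n ω - θb n ω‖ ^ 2) ∂μ ≤
      ENNReal.ofReal (‖θ - θ'‖ ^ 2) * ∏ j ∈ Finset.Ico i n, ENNReal.ofReal (c j) := by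
  induction n, hin using Nat.le_induction with
  | base => simp [hinita, hinitb]
  | succ n hn ih =>
    have hpast : Measurable[⨆ k ∈ Set.Iic n, mβ.comap (Y k)] fun ω => (θa n ω, θb n ω) :=
      (measurable_iSup_comap_of_rec hH hinita hreca hn).prodMk
        (measurable_iSup_comap_of_rec hH hinitb hrecb hn)
    have hdiff (ω : Ω) : θa (n + 1) ω - θb (n + 1) ω = θa n ω - θb n ω
        - γ (n + 1) • (H (θa n ω) (Y (n + 1) ω) - H (θb n ω) (Y (n + 1) ω)) := by
      rw [hreca n ω hn, hrecb n ω hn, smul_sub]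
      abel
    have hΦ : Measurable fun q : (E × E) × β =>
        ENNReal.ofReal (‖q.1.1 - q.1.2 - γ (n + 1) • (H q.1.1 q.2 - H q.1.2 q.2)‖ ^ 2) := by
      have hH₁ : Measurable fun q : (E × E) × β => H q.1.1 q.2 :=
        hH.comp (measurable_fst.fst.prodMk measurable_snd)
      have hH₂ : Measurable fun q : (E × E) × β => H q.1.2 q.2 :=
        hH.comp (measurable_fst.snd.prodMk measurable_snd)
      fun_prop
    calc ∫⁻ ω, ENNReal.ofReal (‖θa (n + 1) ω - θb (n + 1) ω‖ ^ 2) ∂μ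
        ≤ ENNReal.ofReal (c n) * ∫⁻ ω, ENNReal.ofReal (‖θa n ω - θb n ω‖ ^ 2) ∂μ := by
          simp_rw [hdiff]
          refine lintegral_comp_le_of_indepFun (X := fun ω => (θa n ω, θb n ω))
            (Φ := fun p y => ENNReal.ofReal (‖p.1 - p.2 - γ (n + 1) • (H p.1 y - H p.2 y)‖ ^ 2))
            (g := fun p => ENNReal.ofReal (‖p.1 - p.2‖ ^ 2))
            (hpast.mono (iSup₂_le fun k _ => (hY k).comap_le) le_rfl) (hY _)
            (hind.indepFun_succ_of_measurable_past hY hpast) hΦ (by fun_prop)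
            fun p => hstep n hn p.1 p.2
      _ ≤ ENNReal.ofReal (c n) * (ENNReal.ofReal (‖θ - θ'‖ ^ 2) *
            ∏ j ∈ Finset.Ico i n, ENNReal.ofReal (c j)) := by gcongr
      _ = _ := by rw [Finset.prod_Ico_succ_top hn]; ring

end Flow

/-- two-flow `L²`-sensitivity bound for the Robbins–Monro algorithm. -/
theorem robbins_monro_flow_sensitivity
    {Ω : Type*} [m0 : MeasurableSpace Ω] (μ : Measure Ω) [IsProbabilityMeasure μ]
    {d q : ℕ}
    (Y : ℕ → Ω → EuclideanSpace ℝ (Fin q)) (hYmeas : ∀ i, Measurable (Y i))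
    (hiid : iIndepFun Y μ)
    (hident : ∀ i, IdentDistrib (Y i) (Y 1) μ μ)
    (H : EuclideanSpace ℝ (Fin d) → EuclideanSpace ℝ (Fin q) → EuclideanSpace ℝ (Fin d))
    (KH : ℝ) (hKH : 0 < KH)
    (hHlip : LipschitzWith (Real.toNNReal KH)
      (fun p : EuclideanSpace ℝ (Fin d) × EuclideanSpace ℝ (Fin q) => H p.1 p.2))
    (h : EuclideanSpace ℝ (Fin d) → EuclideanSpace ℝ (Fin d))
    (hdef : ∀ θ', h θ' = ∫ ω, H θ' (Y 1 ω) ∂μ)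
    (hC1 : ContDiff ℝ 1 h) (lam : ℝ) (hlam : 0 < lam)
    (hattract : ∀ θ' ξ, lam * ‖ξ‖ ^ 2 ≤ ⟪fderiv ℝ h θ' ξ, ξ⟫)
    (γ : ℕ → ℝ) (hγpos : ∀ n, 1 ≤ n → 0 < γ n)
    -- two flows driven by the same innovations, started at step `i` from `θ` and `θ'`
    (i n : ℕ) (hin : i ≤ n)
    (θ θ' : EuclideanSpace ℝ (Fin d))
    (θa θb : ℕ → Ω → EuclideanSpace ℝ (Fin d))
    (hinita : ∀ ω, θa i ω = θ) (hinitb : ∀ ω, θb i ω = θ')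
    (hreca : ∀ j ω, i ≤ j → θa (j + 1) ω = θa j ω - γ (j + 1) • H (θa j ω) (Y (j + 1) ω))
    (hrecb : ∀ j ω, i ≤ j → θb (j + 1) ω = θb j ω - γ (j + 1) • H (θb j ω) (Y (j + 1) ω)) :
    ∫ ω, ‖θa n ω - θb n ω‖ ^ 2 ∂μ ≤
      ‖θ - θ'‖ ^ 2 *
        ∏ j ∈ Finset.Ico i n, (1 - 2 * lam * γ (j + 1) + KH ^ 2 * γ (j + 1) ^ 2) := by
  rcases subsingleton_or_nontrivial (EuclideanSpace ℝ (Fin d)) with hE | hE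
  · simp [norm_of_subsingleton]
  have hHmeas : Measurable (Function.uncurry H) := hHlip.continuous.measurable
  have hLip (y) : LipschitzWith KH.toNNReal (H · y) := by
    have := hHlip.comp (LipschitzWith.prodMk_right y)
    rwa [mul_one] at this
  have hKH' : (KH.toNNReal : ℝ) = KH := Real.coe_toNNReal KH hKH.le
  have hHa (a) : AEStronglyMeasurable (H a) (μ.map (Y 1)) :=
    (hHlip.continuous.comp (Continuous.prodMk_right a)).aestronglyMeasurable
  have hmean : h = fun a => ∫ y, H a y ∂(μ.map (Y 1)) :=
    funext fun a => by rw [hdef, integral_map (hYmeas 1).aemeasurable (hHa a)]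
  subst hmean
  have := Measure.isProbabilityMeasure_map (μ := μ) (hYmeas 1).aemeasurable
  have hint := Integrable.of_le_inner_fderiv_integral hLip hHa hlam hattract
  have hmono := le_inner_sub_sub_of_le_inner_fderiv (hC1.differentiable one_ne_zero) hattract
  have hγ (j : ℕ) : 0 ≤ γ (j + 1) := (hγpos (j + 1) (Nat.le_add_left 1 j)).le
  have hc (j : ℕ) : 0 ≤ 1 - 2 * lam * γ (j + 1) + KH ^ 2 * γ (j + 1) ^ 2 := by
    simpa only [hKH'] using one_sub_two_mul_add_sq_mul_sq_nonneg hLip hint hmono (hγ j)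
  refine integral_le_of_lintegral_ofReal_le (fun _ => sq_nonneg _)
    (mul_nonneg (sq_nonneg _) (Finset.prod_nonneg fun j _ => hc j)) ?_
  rw [ENNReal.ofReal_mul (sq_nonneg _), ENNReal.ofReal_prod_of_nonneg fun j _ => hc j]
  refine lintegral_ofReal_norm_sub_sq_le_prod hYmeas hiid hHmeas (fun j _ a b => ?_)
    hinita hinitb hreca hrecb hin
  simpa only [(hident (j + 1)).map_eq, hKH'] using
    lintegral_ofReal_norm_sub_smul_sub_sq_le hLip hint hmono (hγ j) a b
end

section
/- Let γ_n = c/n with c > 0 and Π_N = ∏_{k=1}^N (1 − 2λ̲γ_k + [H]₁²γ_k²). If c < 1/(2λ̲), then the series ∑_{k≥1} γ_k²/Π_k converges and Π_N ∑_{k=1}^N γ_k²/Π_k = O(N^{−2cλ̲}); if c > 1/(2λ̲), then Π_N ∑_{k=1}^N γ_k²/Π_k = O(N^{−1}). -/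
open Filter Asymptotics Finset Topology

/-!
Write `β = 2cλ`. The factors of `Π_N` are `1 + x_k` with `x_k + β/k = [H]₁²c²/k²`, so
`log Π_N + β log N = ∑_{k ≤ N} (log (1 + x_k) - x_k) + ∑_{k ≤ N} (x_k + β/k) - β (H_N - log N)`.
Both series converge absolutely because `log (1 + x) - x = O(x²)` and `x_k = O(1/k)`, and
`H_N - log N` converges to Euler's constant; hence `Π_N ≍ N^{-β}` and `γ_k²/Π_k = O(k^{β-2})`.
If `β < 1` these terms are summable, so the partial sums are bounded and the rate is that of `Π_N`.
If `β > 1`, comparing `k^{β-2}` with the increments of `k ↦ k^{β-1}` bounds the partial sums by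
`O(N^{β-1})`.
-/

lemma Real.abs_log_one_add_sub_self_le {x : ℝ} (hx : -(1 / 2) ≤ x) :
    |Real.log (1 + x) - x| ≤ 2 * x ^ 2 := by
  have hpos : 0 < 1 + x := by linarith
  have hupper : Real.log (1 + x) ≤ x := by linarith [Real.log_le_sub_one_of_pos hpos]
  have hlower : x / (1 + x) ≤ Real.log (1 + x) := by
    convert Real.one_sub_inv_le_log_of_pos hpos using 1
    field_simp; ring
  rw [abs_of_nonpos (by linarith)]
  have hgap : x - x / (1 + x) ≤ 2 * x ^ 2 := by
    rw [sub_div' hpos.ne', div_le_iff₀ hpos]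
    nlinarith [sq_nonneg x]
  linarith

lemma isBigO_log_one_add_sub_self {α : Type*} {l : Filter α} {x : α → ℝ}
    (hx : Tendsto x l (𝓝 0)) :
    (fun a => Real.log (1 + x a) - x a) =O[l] fun a => x a ^ 2 := by
  refine isBigO_iff.2 ⟨2, ?_⟩
  filter_upwards [hx.eventually (Ioi_mem_nhds (by norm_num : (-(1 / 2) : ℝ) < 0))] with a ha
  simpa [Real.norm_eq_abs] using Real.abs_log_one_add_sub_self_le (le_of_lt ha)

lemma isBigO_one_sum_Icc_of_summable_norm {E : Type*} [NormedAddCommGroup E] {f : ℕ → E}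
    (hf : Summable fun k => ‖f k‖) :
    (fun N : ℕ => ∑ k ∈ Icc 1 N, f k) =O[atTop] (fun _ => (1 : ℝ)) :=
  isBigO_one_nat_atTop_iff.2 ⟨∑' k, ‖f k‖, fun _ =>
    (norm_sum_le _ _).trans (hf.sum_le_tsum _ fun _ _ => norm_nonneg _)⟩

theorem isTheta_prod_Icc_one_add_rpow {x : ℕ → ℝ} {β : ℝ} (hx : ∀ k, 1 ≤ k → 0 < 1 + x k)
    (hxβ : (fun k : ℕ => x k + β / k) =O[atTop] fun k : ℕ => ((k : ℝ) ^ 2)⁻¹) :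
    (fun N : ℕ => ∏ k ∈ Icc 1 N, (1 + x k)) =Θ[atTop] fun N : ℕ => (N : ℝ) ^ (-β) := by
  have hsq_inv : (fun k : ℕ => ((k : ℝ) ^ 2)⁻¹) =O[atTop] fun k : ℕ => (k : ℝ)⁻¹ := by
    refine isBigO_iff.2 ⟨1, Eventually.of_forall fun k => ?_⟩
    simp only [one_mul, norm_inv, norm_pow, Real.norm_eq_abs, Nat.abs_cast]
    rcases Nat.eq_zero_or_pos k with rfl | hk
    · simp
    · have hk : (1 : ℝ) ≤ k := by exact_mod_cast hk
      exact inv_anti₀ (by positivity) (le_self_pow₀ hk two_ne_zero)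
  have hx_inv : x =O[atTop] fun k : ℕ => (k : ℝ)⁻¹ :=
    ((hxβ.trans hsq_inv).sub ((isBigO_refl _ _).const_mul_left β)).congr_left
      fun k => by ring
  have hlog : (fun k => Real.log (1 + x k) - x k) =O[atTop] fun k : ℕ => ((k : ℝ) ^ 2)⁻¹ :=
    (isBigO_log_one_add_sub_self (hx_inv.trans_tendsto tendsto_inv_atTop_nhds_zero_nat)).trans
      (by simpa only [inv_pow] using hx_inv.pow 2)
  have hsum : Summable fun k : ℕ => ((k : ℝ) ^ 2)⁻¹ := Real.summable_nat_pow_inv.2 one_lt_two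
  have hbounded : (fun N : ℕ => ∑ k ∈ Icc 1 N, Real.log (1 + x k) - -β * Real.log N)
      =O[atTop] fun _ => (1 : ℝ) := by
    refine (((isBigO_one_sum_Icc_of_summable_norm (summable_of_isBigO_nat' hsum hlog).norm).add
      (isBigO_one_sum_Icc_of_summable_norm (summable_of_isBigO_nat' hsum hxβ).norm)).sub
      ((Real.tendsto_harmonic_sub_log.isBigO_one ℝ).const_mul_left β)).congr_left fun N => ?_
    rw [harmonic_eq_sum_Icc]
    push_cast
    simp only [mul_sub, mul_sum, div_eq_mul_inv, sum_add_distrib, sum_sub_distrib]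
    ring
  have hprod : (fun N : ℕ => ∏ k ∈ Icc 1 N, (1 + x k))
      = fun N : ℕ => Real.exp (∑ k ∈ Icc 1 N, Real.log (1 + x k)) := by
    ext N
    rw [Real.exp_sum]
    exact prod_congr rfl fun k hk => (Real.exp_log (hx k (mem_Icc.1 hk).1)).symm
  have hrpow : (fun N : ℕ => Real.exp (-β * Real.log N)) =ᶠ[atTop]
      fun N : ℕ => (N : ℝ) ^ (-β) := by
    filter_upwards [eventually_gt_atTop 0] with N hN
    rw [Real.rpow_def_of_pos (by exact_mod_cast hN), mul_comm]
  rw [hprod]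
  refine (Real.isTheta_exp_comp_exp_comp.2 ?_).trans_eventuallyEq hrpow
  simpa [isBigO_one_iff, Real.norm_eq_abs] using hbounded

lemma min_one_mul_rpow_sub_one_le_rpow_sub_rpow {p : ℝ} (hp : 0 < p) {k : ℝ} (hk : 1 ≤ k) :
    min 1 p * k ^ (p - 1) ≤ k ^ p - (k - 1) ^ p := by
  have hk0 : 0 < k := by linarith
  have hu0 : 0 ≤ 1 - k⁻¹ := sub_nonneg.2 (inv_le_one_of_one_le₀ hk)
  have hu1 : 1 - k⁻¹ ≤ 1 := by have := inv_nonneg.2 hk0.le; linarith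
  have hsplit : (k - 1) ^ p = (1 - k⁻¹) ^ p * k ^ p := by
    rw [← Real.mul_rpow hu0 hk0.le]; congr 1; field_simp
  have hkp : k ^ (p - 1) = k⁻¹ * k ^ p := by
    rw [Real.rpow_sub_one hk0.ne', div_eq_mul_inv, mul_comm]
  have hbound : (1 - k⁻¹) ^ p ≤ 1 - min 1 p * k⁻¹ := by
    rcases le_total p 1 with hp1 | hp1
    · have := rpow_one_add_le_one_add_mul_self (s := -k⁻¹) (by linarith) hp.le hp1
      rw [min_eq_right hp1]
      simpa [sub_eq_add_neg] using this
    · calc (1 - k⁻¹) ^ p ≤ (1 - k⁻¹) ^ (1 : ℝ) :=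
            Real.rpow_le_rpow_of_exponent_ge' hu0 hu1 zero_le_one hp1
        _ = 1 - min 1 p * k⁻¹ := by rw [Real.rpow_one, min_eq_left hp1, one_mul]
  rw [hsplit, hkp]
  nlinarith [Real.rpow_pos_of_pos hk0 p]

lemma min_one_mul_sum_Icc_rpow_sub_one_le {p : ℝ} (hp : 0 < p) (N : ℕ) :
    min 1 p * ∑ k ∈ Icc 1 N, (k : ℝ) ^ (p - 1) ≤ (N : ℝ) ^ p := by
  induction N with
  | zero => simp [Real.zero_rpow hp.ne']
  | succ n ih =>
    rw [sum_Icc_succ_top (by omega), mul_add]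
    have := min_one_mul_rpow_sub_one_le_rpow_sub_rpow hp (k := (n + 1 : ℕ)) (by simp)
    push_cast at this ⊢
    simp only [add_sub_cancel_right] at this
    linarith

lemma isBigO_sum_Icc_of_isBigO_rpow_sub_one {E : Type*} [NormedAddCommGroup E] {f : ℕ → E}
    {p : ℝ} (hp : 0 < p)
    (hf : f =O[atTop] fun k : ℕ => (k : ℝ) ^ (p - 1)) :
    (fun N : ℕ => ∑ k ∈ Icc 1 N, f k) =O[atTop] fun N : ℕ => (N : ℝ) ^ p := by
  obtain ⟨C, hC, hfC⟩ := bound_of_isBigO_nat_atTop hf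
  have hmin : 0 < min 1 p := lt_min one_pos hp
  refine isBigO_iff.2 ⟨C / min 1 p, Eventually.of_forall fun N => ?_⟩
  have hterm : ∀ k ∈ Icc 1 N, ‖f k‖ ≤ C * (k : ℝ) ^ (p - 1) := fun k hk => by
    have hk : (0 : ℝ) < k := by exact_mod_cast (mem_Icc.1 hk).1
    have hpos := Real.rpow_pos_of_pos hk (p - 1)
    simpa [abs_of_pos hpos] using hfC hpos.ne'
  calc ‖∑ k ∈ Icc 1 N, f k‖ ≤ ∑ k ∈ Icc 1 N, C * (k : ℝ) ^ (p - 1) :=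
        (norm_sum_le _ _).trans (sum_le_sum hterm)
    _ = C / min 1 p * (min 1 p * ∑ k ∈ Icc 1 N, (k : ℝ) ^ (p - 1)) := by
        rw [← mul_sum]; field_simp
    _ ≤ C / min 1 p * ‖(N : ℝ) ^ p‖ := by
        rw [Real.norm_of_nonneg (by positivity)]
        gcongr
        exact min_one_mul_sum_Icc_rpow_sub_one_le hp N

theorem step_over_n_rates_general
    (c lam H1 : ℝ) (hlam : 0 < lam)
    (γ : ℕ → ℝ) (hγ : ∀ n : ℕ, γ n = c / n)
    (P : ℕ → ℝ)
    (hP : ∀ N, P N = ∏ k ∈ Finset.Icc 1 N, (1 - 2 * lam * γ k + H1 ^ 2 * γ k ^ 2))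
    (hpos : ∀ k : ℕ, 1 ≤ k → 0 < 1 - 2 * lam * γ k + H1 ^ 2 * γ k ^ 2) :
    (c < 1 / (2 * lam) →
      Summable (fun k : ℕ => γ (k + 1) ^ 2 / P (k + 1)) ∧
      (fun N : ℕ => P N * ∑ k ∈ Finset.Icc 1 N, γ k ^ 2 / P k) =O[atTop]
        (fun N : ℕ => (N : ℝ) ^ (-(2 * c * lam)))) ∧
    (1 / (2 * lam) < c →
      (fun N : ℕ => P N * ∑ k ∈ Finset.Icc 1 N, γ k ^ 2 / P k) =O[atTop]
        (fun N : ℕ => (N : ℝ)⁻¹)) := by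
  set β := 2 * c * lam
  have hΘ : P =Θ[atTop] fun N : ℕ => (N : ℝ) ^ (-β) := by
    have hP' : P = fun N => ∏ k ∈ Icc 1 N, (1 + (H1 ^ 2 * γ k ^ 2 - 2 * lam * γ k)) :=
      funext fun N => (hP N).trans (prod_congr rfl fun k _ => by ring)
    rw [hP']
    refine isTheta_prod_Icc_one_add_rpow (fun k hk => by linarith [hpos k hk]) ?_
    refine (isBigO_const_mul_self (H1 ^ 2 * c ^ 2) _ _).congr_left fun k => ?_
    rw [hγ]
    ring
  have hterm : (fun k : ℕ => γ k ^ 2 / P k) =O[atTop] fun k : ℕ => (k : ℝ) ^ (β - 2) := by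
    have hmul := (isBigO_refl (fun k : ℕ => γ k ^ 2) atTop).mul hΘ.inv.isBigO
    refine (hmul.trans_eventuallyEq ?_).trans (isBigO_const_mul_self (c ^ 2) _ _)
    filter_upwards [eventually_gt_atTop 0] with k hk
    have hk : (0 : ℝ) < k := by exact_mod_cast hk
    rw [hγ, Real.rpow_neg hk.le, inv_inv, Real.rpow_sub hk, Real.rpow_two]
    ring
  have hlam2 : 0 < 2 * lam := by positivity
  refine ⟨fun hsmall => ?_, fun hbig => ?_⟩
  · have hβ1 : β < 1 := by linarith [(lt_div_iff₀ hlam2).1 hsmall]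
    have hsummable : Summable fun k : ℕ => γ k ^ 2 / P k :=
      summable_of_isBigO_nat' (Real.summable_nat_rpow.2 (by linarith)) hterm
    refine ⟨(summable_nat_add_iff 1).2 hsummable, ?_⟩
    simpa using hΘ.isBigO.mul (isBigO_one_sum_Icc_of_summable_norm hsummable.norm)
  · have hβ1 : 1 < β := by linarith [(div_lt_iff₀ hlam2).1 hbig]
    have hsum := isBigO_sum_Icc_of_isBigO_rpow_sub_one (p := β - 1) (by linarith)
      (by simpa only [sub_sub, show (1 : ℝ) + 1 = 2 by norm_num] using hterm)
    refine (hΘ.isBigO.mul hsum).trans_eventuallyEq ?_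
    filter_upwards [eventually_gt_atTop 0] with N hN
    rw [← Real.rpow_add (by exact_mod_cast hN), show -β + (β - 1) = -1 by ring, Real.rpow_neg_one]

/-- rate of the concentration factor for steps `γ_n = c/n`. -/
theorem step_over_n_rates
    (c lam H1 : ℝ) (hc : 0 < c) (hlam : 0 < lam) (hH1 : 0 < H1)
    (γ : ℕ → ℝ) (hγ : ∀ n : ℕ, γ n = c / n)
    (P : ℕ → ℝ)
    (hP : ∀ N, P N = ∏ k ∈ Finset.Icc 1 N, (1 - 2 * lam * γ k + H1 ^ 2 * γ k ^ 2))
    (hpos : ∀ k : ℕ, 1 ≤ k → 0 < 1 - 2 * lam * γ k + H1 ^ 2 * γ k ^ 2) :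
    (c < 1 / (2 * lam) →
      Summable (fun k : ℕ => γ (k + 1) ^ 2 / P (k + 1)) ∧
      (fun N : ℕ => P N * ∑ k ∈ Finset.Icc 1 N, γ k ^ 2 / P k) =O[atTop]
        (fun N : ℕ => (N : ℝ) ^ (-(2 * c * lam)))) ∧
    (1 / (2 * lam) < c →
      (fun N : ℕ => P N * ∑ k ∈ Finset.Icc 1 N, γ k ^ 2 / P k) =O[atTop]
        (fun N : ℕ => (N : ℝ)⁻¹)) :=
  step_over_n_rates_general c lam H1 hlam γ hγ P hP hpos
end

section
/- Let γ_n = c/n^ρ with c > 0 and 1/2 < ρ < 1, and Π_N = ∏_{k=1}^N (1 − 2λ̲γ_k + [H]₁²γ_k²) with λ̲ > 0. Then there exists C > 0 such that Π_N ≤ C exp(−2λ̲ c N^{1−ρ}/(1−ρ)) for all N ≥ 1, and for every ε ∈ (0, 1−ρ), Π_N ∑_{k=1}^N γ_k²/Π_k = o(N^{−ρ+ε}) as N → ∞. -/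
/-! Since `1 + x ≤ exp x`, `Π_N ≤ Π_M exp (H² ∑ γ_k² - 2λ ∑_{M<k≤N} γ_k)`, and `∑ γ_k² < ∞`
because `2ρ > 1`; comparing `∑ k^{-ρ}` with `∫ x^{-ρ}` gives the first bound. For the second,
split the sum at `N/2`. The head is damped by `Π_N / Π_{N/2} ≲ exp (-λc N^{1-ρ}) = o(N^{-ρ})`.
On the tail, `S_N = Π_N ∑_{N/2<k≤N} γ_k²/Π_k` obeys `S_k = a_k S_{k-1} + γ_k²` with factors
`a_k ≤ 1 - λγ_k`, which keeps `S_N ≤ max γ_k / λ = O(N^{-ρ})`. -/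

open Filter Asymptotics Finset Topology

lemma Real.prod_le_exp_sum_sub_one {ι : Type*} (s : Finset ι) {f : ι → ℝ}
    (hf : ∀ i ∈ s, 0 ≤ f i) : ∏ i ∈ s, f i ≤ Real.exp (∑ i ∈ s, (f i - 1)) := by
  rw [Real.exp_sum]
  exact prod_le_prod hf fun i _ => by linarith [Real.add_one_le_exp (f i - 1)]

lemma isLittleO_natCast_rpow_rpow {p q : ℝ} (hpq : p < q) :
    (fun N : ℕ => (N : ℝ) ^ p) =o[atTop] (fun N : ℕ => (N : ℝ) ^ q) := by
  rw [isLittleO_iff_tendsto' ?_]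
  · refine ((tendsto_rpow_neg_atTop (sub_pos.2 hpq)).comp tendsto_natCast_atTop_atTop).congr' ?_
    filter_upwards [eventually_gt_atTop 0] with N hN
    rw [Function.comp_apply, neg_sub, ← Real.rpow_sub (Nat.cast_pos.2 hN)]
  · filter_upwards [eventually_gt_atTop 0] with N hN h
    exact absurd h (Real.rpow_pos_of_pos (Nat.cast_pos.2 hN) q).ne'

lemma isLittleO_exp_neg_mul_natCast_rpow {a s : ℝ} (ha : 0 < a) (hs : 0 < s) (b : ℝ) :
    (fun N : ℕ => Real.exp (-a * (N : ℝ) ^ s)) =o[atTop] (fun N : ℕ => (N : ℝ) ^ b) := by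
  refine ((isLittleO_exp_neg_mul_rpow_atTop ha (b / s)).comp_tendsto
    ((tendsto_rpow_atTop hs).comp tendsto_natCast_atTop_atTop)).congr_right fun N => ?_
  simp only [Function.comp_apply]
  rw [← Real.rpow_mul (Nat.cast_nonneg N), mul_div_cancel₀ b hs.ne']

lemma sum_Icc_rpow_neg_ge {ρ : ℝ} (hρ0 : 0 ≤ ρ) (hρ1 : ρ < 1) (N : ℕ) :
    ((N : ℝ) ^ (1 - ρ) - 1) / (1 - ρ) ≤ ∑ k ∈ Icc 1 N, (k : ℝ) ^ (-ρ) := by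
  have hanti : AntitoneOn (fun x : ℝ => x ^ (-ρ)) (Set.Icc 1 (1 + N)) := fun x hx y _ hxy =>
    Real.rpow_le_rpow_of_nonpos (one_pos.trans_le hx.1) hxy (neg_nonpos.2 hρ0)
  have hshift : ∑ k ∈ Icc 1 N, (k : ℝ) ^ (-ρ) = ∑ i ∈ range N, (1 + (i : ℝ)) ^ (-ρ) := by
    rw [← Ico_add_one_right_eq_Icc, sum_Ico_eq_sum_range, Nat.add_sub_cancel]
    push_cast
    rfl
  calc ((N : ℝ) ^ (1 - ρ) - 1) / (1 - ρ) ≤ ((1 + N : ℝ) ^ (1 - ρ) - 1) / (1 - ρ) := by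
        gcongr
        linarith
    _ = ∫ x in (1 : ℝ)..1 + N, x ^ (-ρ) := by
        rw [integral_rpow (Or.inl (by linarith)), Real.one_rpow, neg_add_eq_sub]
    _ ≤ ∑ k ∈ Icc 1 N, (k : ℝ) ^ (-ρ) := hshift ▸ hanti.integral_le_sum

lemma rpow_neg_le_of_mem_Ioc_half {ρ : ℝ} (hρ : 0 ≤ ρ) {N k : ℕ} (hk : k ∈ Ioc (N / 2) N) :
    (k : ℝ) ^ (-ρ) ≤ 2 ^ ρ * (N : ℝ) ^ (-ρ) := by
  obtain ⟨hNk, hkN⟩ := mem_Ioc.1 hk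
  have hN : (0 : ℝ) < N / 2 := by
    have : 0 < N := by omega
    positivity
  have hk2 : (N : ℝ) / 2 ≤ k := by
    rw [div_le_iff₀ two_pos]
    exact_mod_cast (by omega : N ≤ k * 2)
  calc (k : ℝ) ^ (-ρ) ≤ ((N : ℝ) / 2) ^ (-ρ) :=
        Real.rpow_le_rpow_of_nonpos hN hk2 (neg_nonpos.2 hρ)
    _ = 2 ^ ρ * (N : ℝ) ^ (-ρ) := by
        rw [Real.div_rpow (Nat.cast_nonneg N) zero_le_two, Real.rpow_neg zero_le_two,
          div_inv_eq_mul, mul_comm]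

lemma sum_Ioc_half_rpow_neg_ge {ρ : ℝ} (hρ : 0 ≤ ρ) {N : ℕ} (hN : 1 ≤ N) :
    (N : ℝ) ^ (1 - ρ) / 2 ≤ ∑ k ∈ Ioc (N / 2) N, (k : ℝ) ^ (-ρ) := by
  have hNpos : (0 : ℝ) < N := by exact_mod_cast hN
  have hcard : (N : ℝ) / 2 ≤ #(Ioc (N / 2) N) := by
    rw [Nat.card_Ioc, div_le_iff₀ two_pos]
    exact_mod_cast (by omega : N ≤ (N - N / 2) * 2)
  calc (N : ℝ) ^ (1 - ρ) / 2 = (N : ℝ) / 2 * (N : ℝ) ^ (-ρ) := by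
        rw [sub_eq_add_neg, Real.rpow_add hNpos, Real.rpow_one]
        ring
    _ ≤ #(Ioc (N / 2) N) * (N : ℝ) ^ (-ρ) := by gcongr
    _ ≤ ∑ k ∈ Ioc (N / 2) N, (k : ℝ) ^ (-ρ) := by
        rw [← nsmul_eq_mul]
        refine card_nsmul_le_sum _ _ _ fun k hk => ?_
        obtain ⟨hNk, hkN⟩ := mem_Ioc.1 hk
        exact Real.rpow_le_rpow_of_nonpos (by exact_mod_cast (by omega : 0 < k))
          (by exact_mod_cast hkN) (neg_nonpos.2 hρ)

lemma summable_sq_mul_rpow_neg (c : ℝ) {ρ : ℝ} (hρ : 1 / 2 < ρ) :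
    Summable fun k : ℕ => (c * (k : ℝ) ^ (-ρ)) ^ 2 := by
  refine ((Real.summable_nat_rpow.2 (by linarith : -ρ * 2 < -1)).mul_left (c ^ 2)).congr
    fun k => ?_
  rw [mul_pow, ← Real.rpow_mul_natCast (Nat.cast_nonneg k), Nat.cast_ofNat]

lemma Nat.Icc_one_eq_Ioc_zero (N : ℕ) : Icc 1 N = Ioc 0 N :=
  Icc_add_one_left_eq_Ioc 0 N

noncomputable def stepProduct (lam H : ℝ) (γ : ℕ → ℝ) (N : ℕ) : ℝ :=
  ∏ k ∈ Icc 1 N, (1 - 2 * lam * γ k + H ^ 2 * γ k ^ 2)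

section stepProduct

variable {lam H : ℝ} {γ : ℕ → ℝ} {M N : ℕ}

lemma stepProduct_zero : stepProduct lam H γ 0 = 1 := by
  simp [stepProduct]

lemma stepProduct_succ (N : ℕ) : stepProduct lam H γ (N + 1) =
    stepProduct lam H γ N * (1 - 2 * lam * γ (N + 1) + H ^ 2 * γ (N + 1) ^ 2) :=
  prod_Icc_succ_top (by omega) _

lemma stepProduct_eq_mul_prod_Ioc (hMN : M ≤ N) : stepProduct lam H γ N =
    stepProduct lam H γ M * ∏ k ∈ Ioc M N, (1 - 2 * lam * γ k + H ^ 2 * γ k ^ 2) := by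
  simp only [stepProduct, Nat.Icc_one_eq_Ioc_zero]
  exact (prod_Ioc_consecutive _ M.zero_le hMN).symm

lemma stepProduct_pos (hpos : ∀ k : ℕ, 1 ≤ k → 0 < 1 - 2 * lam * γ k + H ^ 2 * γ k ^ 2)
    (N : ℕ) : 0 < stepProduct lam H γ N :=
  prod_pos fun k hk => hpos k (mem_Icc.1 hk).1

lemma stepProduct_mul_sum_nonneg
    (hpos : ∀ k : ℕ, 1 ≤ k → 0 < 1 - 2 * lam * γ k + H ^ 2 * γ k ^ 2) (N : ℕ) (s : Finset ℕ) :
    0 ≤ stepProduct lam H γ N * ∑ k ∈ s, γ k ^ 2 / stepProduct lam H γ k :=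
  mul_nonneg (stepProduct_pos hpos N).le
    (sum_nonneg fun k _ => div_nonneg (sq_nonneg _) (stepProduct_pos hpos k).le)

lemma stepProduct_le_mul_exp (hpos : ∀ k : ℕ, 1 ≤ k → 0 < 1 - 2 * lam * γ k + H ^ 2 * γ k ^ 2)
    (hγ2 : Summable fun k => γ k ^ 2) (hMN : M ≤ N) :
    stepProduct lam H γ N ≤ stepProduct lam H γ M *
      Real.exp (H ^ 2 * ∑' k, γ k ^ 2 - 2 * lam * ∑ k ∈ Ioc M N, γ k) := by
  rw [stepProduct_eq_mul_prod_Ioc hMN]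
  gcongr
  · exact (stepProduct_pos hpos M).le
  calc ∏ k ∈ Ioc M N, (1 - 2 * lam * γ k + H ^ 2 * γ k ^ 2)
      ≤ Real.exp (∑ k ∈ Ioc M N, (1 - 2 * lam * γ k + H ^ 2 * γ k ^ 2 - 1)) :=
        Real.prod_le_exp_sum_sub_one _ fun k hk => (hpos k (by grind)).le
    _ ≤ Real.exp (H ^ 2 * ∑' k, γ k ^ 2 - 2 * lam * ∑ k ∈ Ioc M N, γ k) := by
        have hK : ∑ k ∈ Ioc M N, γ k ^ 2 ≤ ∑' k, γ k ^ 2 :=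
          hγ2.sum_le_tsum _ fun k _ => sq_nonneg _
        rw [sum_congr rfl fun k _ => show 1 - 2 * lam * γ k + H ^ 2 * γ k ^ 2 - 1 =
          H ^ 2 * γ k ^ 2 - 2 * lam * γ k by ring, sum_sub_distrib, ← mul_sum, ← mul_sum]
        gcongr

lemma stepProduct_mul_sum_Icc_le (hlam : 0 ≤ lam)
    (hpos : ∀ k : ℕ, 1 ≤ k → 0 < 1 - 2 * lam * γ k + H ^ 2 * γ k ^ 2)
    (hγ0 : ∀ k, 0 ≤ γ k) (hγ2 : Summable fun k => γ k ^ 2) (hMN : M ≤ N) :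
    stepProduct lam H γ N * ∑ k ∈ Icc 1 M, γ k ^ 2 / stepProduct lam H γ k ≤
      (∑' k, γ k ^ 2) * Real.exp (H ^ 2 * ∑' k, γ k ^ 2 - 2 * lam * ∑ k ∈ Ioc M N, γ k) := by
  set E := Real.exp (H ^ 2 * ∑' k, γ k ^ 2 - 2 * lam * ∑ k ∈ Ioc M N, γ k) with hE
  have hratio : ∀ k ∈ Icc 1 M, stepProduct lam H γ N / stepProduct lam H γ k ≤ E := by
    intro k hk
    have hkN : k ≤ N := (mem_Icc.1 hk).2.trans hMN
    rw [div_le_iff₀' (stepProduct_pos hpos k)]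
    refine (stepProduct_le_mul_exp hpos hγ2 hkN).trans ?_
    rw [hE]
    gcongr
    · exact (stepProduct_pos hpos k).le
    · exact fun j _ _ => hγ0 j
    · exact (mem_Icc.1 hk).2
  calc stepProduct lam H γ N * ∑ k ∈ Icc 1 M, γ k ^ 2 / stepProduct lam H γ k
      = ∑ k ∈ Icc 1 M, γ k ^ 2 * (stepProduct lam H γ N / stepProduct lam H γ k) := by
        rw [mul_sum]
        exact sum_congr rfl fun k _ => by ring
    _ ≤ ∑ k ∈ Icc 1 M, γ k ^ 2 * E := by gcongr with k hk; exact hratio k hk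
    _ ≤ (∑' k, γ k ^ 2) * E := by
        rw [← sum_mul]
        gcongr
        exact hγ2.sum_le_tsum _ fun k _ => sq_nonneg _

lemma stepProduct_mul_sum_Ioc_le (hlam : 0 < lam)
    (hpos : ∀ k : ℕ, 1 ≤ k → 0 < 1 - 2 * lam * γ k + H ^ 2 * γ k ^ 2) {g : ℝ} (hg : 0 ≤ g)
    (hgH : H ^ 2 * g ≤ lam) (hγ : ∀ k ∈ Ioc M N, 0 ≤ γ k ∧ γ k ≤ g) (hMN : M ≤ N) :
    stepProduct lam H γ N * ∑ k ∈ Ioc M N, γ k ^ 2 / stepProduct lam H γ k ≤ g / lam := by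
  induction N, hMN using Nat.le_induction with
  | base => simpa using div_nonneg hg hlam.le
  | succ n hMn ih =>
    obtain ⟨hγ0, hγg⟩ := hγ (n + 1) (mem_Ioc.2 ⟨by omega, le_rfl⟩)
    have ih := ih fun k hk => hγ k (Ioc_subset_Ioc_right n.le_succ hk)
    set a := 1 - 2 * lam * γ (n + 1) + H ^ 2 * γ (n + 1) ^ 2 with ha_def
    have ha0 : 0 < a := hpos (n + 1) (by omega)
    have ha : a ≤ 1 - lam * γ (n + 1) := by
      nlinarith [mul_le_mul_of_nonneg_right hγg (mul_nonneg (sq_nonneg H) hγ0),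
        mul_le_mul_of_nonneg_right hgH hγ0]
    calc stepProduct lam H γ (n + 1) * ∑ k ∈ Ioc M (n + 1), γ k ^ 2 / stepProduct lam H γ k
        = a * (stepProduct lam H γ n * ∑ k ∈ Ioc M n, γ k ^ 2 / stepProduct lam H γ k) +
          γ (n + 1) ^ 2 := by
          rw [sum_Ioc_succ_top hMn, mul_add, mul_div_cancel₀ _ (stepProduct_pos hpos _).ne',
            stepProduct_succ]
          ring
      _ ≤ a * (g / lam) + γ (n + 1) * g := by
        rw [sq]
        gcongr
      _ ≤ (1 - lam * γ (n + 1)) * (g / lam) + γ (n + 1) * g := by gcongr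
      _ = g / lam := by
        field_simp
        ring

end stepProduct

theorem stepProduct_rpow_le_mul_exp {c lam H ρ : ℝ} (hc : 0 ≤ c) (hlam : 0 ≤ lam)
    (hρ1 : 1 / 2 < ρ) (hρ2 : ρ < 1)
    (hpos : ∀ k : ℕ, 1 ≤ k →
      0 < 1 - 2 * lam * (c * (k : ℝ) ^ (-ρ)) + H ^ 2 * (c * (k : ℝ) ^ (-ρ)) ^ 2) :
    ∃ C : ℝ, 0 < C ∧ ∀ N : ℕ, stepProduct lam H (fun k => c * (k : ℝ) ^ (-ρ)) N ≤
      C * Real.exp (-2 * lam * c * (N : ℝ) ^ (1 - ρ) / (1 - ρ)) := by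
  set K := ∑' k : ℕ, (c * (k : ℝ) ^ (-ρ)) ^ 2
  refine ⟨Real.exp (H ^ 2 * K + 2 * lam * c / (1 - ρ)), Real.exp_pos _, fun N => ?_⟩
  have hΓ : c * (((N : ℝ) ^ (1 - ρ) - 1) / (1 - ρ)) ≤ ∑ k ∈ Ioc 0 N, c * (k : ℝ) ^ (-ρ) := by
    rw [← mul_sum, ← Nat.Icc_one_eq_Ioc_zero]
    exact mul_le_mul_of_nonneg_left (sum_Icc_rpow_neg_ge (by linarith) hρ2 N) hc
  calc stepProduct lam H (fun k => c * (k : ℝ) ^ (-ρ)) N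
      ≤ stepProduct lam H (fun k => c * (k : ℝ) ^ (-ρ)) 0 *
          Real.exp (H ^ 2 * K - 2 * lam * ∑ k ∈ Ioc 0 N, c * (k : ℝ) ^ (-ρ)) :=
        stepProduct_le_mul_exp hpos (summable_sq_mul_rpow_neg c hρ1) N.zero_le
    _ ≤ Real.exp (H ^ 2 * K + 2 * lam * c / (1 - ρ)) *
          Real.exp (-2 * lam * c * (N : ℝ) ^ (1 - ρ) / (1 - ρ)) := by
        rw [stepProduct_zero, one_mul, ← Real.exp_add]
        gcongr
        have hexp : -2 * lam * c * (N : ℝ) ^ (1 - ρ) / (1 - ρ) =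
            -(2 * lam * (c * (((N : ℝ) ^ (1 - ρ) - 1) / (1 - ρ)))) - 2 * lam * c / (1 - ρ) := by
          ring
        linarith [mul_le_mul_of_nonneg_left hΓ (by positivity : (0 : ℝ) ≤ 2 * lam)]

theorem stepProduct_rpow_mul_sum_Icc_half_isBigO {c lam H ρ : ℝ} (hc : 0 < c) (hlam : 0 < lam)
    (hρ1 : 1 / 2 < ρ) (hρ2 : ρ < 1)
    (hpos : ∀ k : ℕ, 1 ≤ k →
      0 < 1 - 2 * lam * (c * (k : ℝ) ^ (-ρ)) + H ^ 2 * (c * (k : ℝ) ^ (-ρ)) ^ 2) :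
    (fun N : ℕ => stepProduct lam H (fun k => c * (k : ℝ) ^ (-ρ)) N *
      ∑ k ∈ Icc 1 (N / 2),
        (c * (k : ℝ) ^ (-ρ)) ^ 2 / stepProduct lam H (fun k => c * (k : ℝ) ^ (-ρ)) k)
      =O[atTop] fun N : ℕ => (N : ℝ) ^ (-ρ) := by
  set K := ∑' k : ℕ, (c * (k : ℝ) ^ (-ρ)) ^ 2
  have hdamped : ∀ᶠ N : ℕ in atTop,
      H ^ 2 * K - 2 * lam * ∑ k ∈ Ioc (N / 2) N, c * (k : ℝ) ^ (-ρ) ≤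
        H ^ 2 * K + -(lam * c) * (N : ℝ) ^ (1 - ρ) := by
    filter_upwards [eventually_ge_atTop 1] with N hN
    rw [← mul_sum]
    nlinarith [mul_le_mul_of_nonneg_left (sum_Ioc_half_rpow_neg_ge (by linarith) hN)
      (by positivity : (0 : ℝ) ≤ 2 * lam * c)]
  refine IsBigO.trans ?_
    (isLittleO_exp_neg_mul_natCast_rpow (a := lam * c) (s := 1 - ρ) (by positivity) (by linarith)
      (-ρ)).isBigO
  refine IsBigO.of_bound (K * Real.exp (H ^ 2 * K)) ?_
  filter_upwards [hdamped] with N hN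
  rw [Real.norm_of_nonneg (stepProduct_mul_sum_nonneg hpos _ _),
    Real.norm_of_nonneg (Real.exp_pos _).le, mul_assoc, ← Real.exp_add]
  refine (stepProduct_mul_sum_Icc_le hlam.le hpos (fun k => by positivity)
    (summable_sq_mul_rpow_neg c hρ1) (Nat.div_le_self N 2)).trans ?_
  gcongr

theorem stepProduct_rpow_mul_sum_Ioc_half_isBigO {c lam H ρ : ℝ} (hc : 0 ≤ c) (hlam : 0 < lam)
    (hρ : 0 < ρ)
    (hpos : ∀ k : ℕ, 1 ≤ k →
      0 < 1 - 2 * lam * (c * (k : ℝ) ^ (-ρ)) + H ^ 2 * (c * (k : ℝ) ^ (-ρ)) ^ 2) :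
    (fun N : ℕ => stepProduct lam H (fun k => c * (k : ℝ) ^ (-ρ)) N *
      ∑ k ∈ Ioc (N / 2) N,
        (c * (k : ℝ) ^ (-ρ)) ^ 2 / stepProduct lam H (fun k => c * (k : ℝ) ^ (-ρ)) k)
      =O[atTop] fun N : ℕ => (N : ℝ) ^ (-ρ) := by
  have hsmall : ∀ᶠ N : ℕ in atTop, H ^ 2 * (c * (2 ^ ρ * (N : ℝ) ^ (-ρ))) ≤ lam := by
    have : Tendsto (fun N : ℕ => H ^ 2 * (c * (2 ^ ρ * (N : ℝ) ^ (-ρ)))) atTop (𝓝 0) := by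
      simpa using ((((tendsto_rpow_neg_atTop hρ).comp tendsto_natCast_atTop_atTop).const_mul
        (2 ^ ρ)).const_mul c).const_mul (H ^ 2)
    exact this.eventually (ge_mem_nhds hlam)
  refine IsBigO.of_bound (c * 2 ^ ρ / lam) ?_
  filter_upwards [hsmall] with N hN
  rw [Real.norm_of_nonneg (stepProduct_mul_sum_nonneg hpos _ _),
    Real.norm_of_nonneg (by positivity), ← mul_div_right_comm, mul_assoc]
  refine stepProduct_mul_sum_Ioc_le hlam hpos (by positivity) hN (fun k hk => ⟨by positivity, ?_⟩)
    (Nat.div_le_self N 2)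
  exact mul_le_mul_of_nonneg_left (rpow_neg_le_of_mem_Ioc_half hρ.le hk) hc

theorem stepProduct_rpow_mul_sum_isBigO {c lam H ρ : ℝ} (hc : 0 < c) (hlam : 0 < lam)
    (hρ1 : 1 / 2 < ρ) (hρ2 : ρ < 1)
    (hpos : ∀ k : ℕ, 1 ≤ k →
      0 < 1 - 2 * lam * (c * (k : ℝ) ^ (-ρ)) + H ^ 2 * (c * (k : ℝ) ^ (-ρ)) ^ 2) :
    (fun N : ℕ => stepProduct lam H (fun k => c * (k : ℝ) ^ (-ρ)) N *
      ∑ k ∈ Icc 1 N, (c * (k : ℝ) ^ (-ρ)) ^ 2 / stepProduct lam H (fun k => c * (k : ℝ) ^ (-ρ)) k)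
      =O[atTop] fun N : ℕ => (N : ℝ) ^ (-ρ) := by
  have hsplit : ∀ N : ℕ, Icc 1 N = Icc 1 (N / 2) ∪ Ioc (N / 2) N := fun N => by
    ext k
    simp only [mem_Icc, mem_Ioc, mem_union]
    omega
  refine ((stepProduct_rpow_mul_sum_Icc_half_isBigO hc hlam hρ1 hρ2 hpos).add
    (stepProduct_rpow_mul_sum_Ioc_half_isBigO hc.le hlam (by linarith) hpos)).congr_left
    fun N => ?_
  rw [hsplit N, sum_union (disjoint_left.2 fun k hk hk' => by grind), mul_add]

theorem step_over_n_rho_rates_general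
    (c lam H1 ρ : ℝ) (hc : 0 < c) (hlam : 0 < lam)
    (hρ1 : 1 / 2 < ρ) (hρ2 : ρ < 1)
    (γ : ℕ → ℝ) (hγ : ∀ n : ℕ, γ n = c / (n : ℝ) ^ ρ)
    (P : ℕ → ℝ)
    (hP : ∀ N, P N = ∏ k ∈ Finset.Icc 1 N, (1 - 2 * lam * γ k + H1 ^ 2 * γ k ^ 2))
    (hpos : ∀ k : ℕ, 1 ≤ k → 0 < 1 - 2 * lam * γ k + H1 ^ 2 * γ k ^ 2) :
    (∃ C : ℝ, 0 < C ∧ ∀ N : ℕ, 1 ≤ N →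
      P N ≤ C * Real.exp (-2 * lam * c * (N : ℝ) ^ (1 - ρ) / (1 - ρ))) ∧
    (∀ ε : ℝ, 0 < ε → ε < 1 - ρ →
      (fun N : ℕ => P N * ∑ k ∈ Finset.Icc 1 N, γ k ^ 2 / P k) =o[atTop]
        (fun N : ℕ => (N : ℝ) ^ (-ρ + ε))) := by
  obtain rfl : γ = fun k : ℕ => c * (k : ℝ) ^ (-ρ) := funext fun k => by
    rw [hγ, Real.rpow_neg (Nat.cast_nonneg k), div_eq_mul_inv]
  obtain rfl : P = stepProduct lam H1 _ := funext hP
  refine ⟨?_, fun ε hε _ => ?_⟩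
  · obtain ⟨C, hC, hbound⟩ := stepProduct_rpow_le_mul_exp hc.le hlam.le hρ1 hρ2 hpos
    exact ⟨C, hC, fun N _ => hbound N⟩
  · exact (stepProduct_rpow_mul_sum_isBigO hc hlam hρ1 hρ2 hpos).trans_isLittleO
      (isLittleO_natCast_rpow_rpow (by linarith))

/-- rates for polynomial steps `γ_n = c/n^ρ`, `1/2 < ρ < 1`. -/
theorem step_over_n_rho_rates
    (c lam H1 ρ : ℝ) (hc : 0 < c) (hlam : 0 < lam) (hH1 : 0 < H1)
    (hρ1 : 1 / 2 < ρ) (hρ2 : ρ < 1)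
    (γ : ℕ → ℝ) (hγ : ∀ n : ℕ, γ n = c / (n : ℝ) ^ ρ)
    (P : ℕ → ℝ)
    (hP : ∀ N, P N = ∏ k ∈ Finset.Icc 1 N, (1 - 2 * lam * γ k + H1 ^ 2 * γ k ^ 2))
    (hpos : ∀ k : ℕ, 1 ≤ k → 0 < 1 - 2 * lam * γ k + H1 ^ 2 * γ k ^ 2) :
    (∃ C : ℝ, 0 < C ∧ ∀ N : ℕ, 1 ≤ N →
      P N ≤ C * Real.exp (-2 * lam * c * (N : ℝ) ^ (1 - ρ) / (1 - ρ))) ∧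
    (∀ ε : ℝ, 0 < ε → ε < 1 - ρ →
      (fun N : ℕ => P N * ∑ k ∈ Finset.Icc 1 N, γ k ^ 2 / P k) =o[atTop]
        (fun N : ℕ => (N : ℝ) ^ (-ρ + ε))) :=
  step_over_n_rho_rates_general c lam H1 ρ hc hlam hρ1 hρ2 γ hγ P hP hpos
end
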